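/- arXiv:2604.01846 — 3 statements merged into one kernel-verified Lean document; each statement's English description precedes it below -/
import Mathlib

section
/- Let g ∈ GL_n(E) be non-critical of type S₀. Then Σ_{u ∈ W_n^{S₀}} ( Ad_{[u]⁻¹}(𝔭_{S₀(u)}) ∩ Ad_g(𝔟) ) = Ad_g(𝔟), as subspaces of M_n(E). (This is the paper's 'infinite fern' proposition for the semistable case: the sum over all refinements u of the parabolic deformation directions fills out the full space of Hodge-filtration-preserving endomorphisms.) -/
/-!
Statement 5: the "infinite fern" proposition for the semistable case:
`Σ_{u ∈ W_n^{S₀}} ( Ad_{[u]⁻¹}(𝔭_{S₀(u)}) ∩ Ad_g(𝔟) ) = Ad_g(𝔟)`.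
All indexing is 0-based.
-/

open scoped Classical

noncomputable section

namespace Stmt5

/-- The permutation matrix `[u]`, characterized by `[u] · eⱼ = e_{u j}`. -/
def permMat (E : Type*) [Field E] {n : ℕ} (u : Equiv.Perm (Fin n)) :
    Matrix (Fin n) (Fin n) E :=
  Matrix.of fun i j => if i = u j then 1 else 0

/-- The antidiagonal permutation matrix `w₀`. -/
def w0Mat (E : Type*) [Field E] (n : ℕ) : Matrix (Fin n) (Fin n) E :=
  Matrix.of fun i j => if (i : ℕ) + (j : ℕ) + 1 = n then 1 else 0

variable {E : Type*} [Field E]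

/-- Membership in the Borel subgroup `B` of invertible upper triangular matrices. -/
def IsBorel {n : ℕ} (b : Matrix (Fin n) (Fin n) E) : Prop :=
  IsUnit b ∧ ∀ i j : Fin n, j < i → b i j = 0

/-- Membership in the big Bruhat cell `B w₀ B`. -/
def InBigCell {n : ℕ} (g : Matrix (Fin n) (Fin n) E) : Prop :=
  ∃ b b' : Matrix (Fin n) (Fin n) E, IsBorel b ∧ IsBorel b' ∧ g = b * w0Mat E n * b'

/-- `u ∈ W_n^{S₀}` (0-based). -/
def WminRep {n : ℕ} (S0 : Set ℕ) (u : Equiv.Perm (Fin n)) : Prop :=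
  ∀ i j : Fin n, (j : ℕ) = (i : ℕ) + 1 → (i : ℕ) ∈ S0 → u i < u j

/-- `g ∈ GL_n(E)` is non-critical of type `S₀`. -/
def NonCritical {n : ℕ} (S0 : Set ℕ) (g : Matrix (Fin n) (Fin n) E) : Prop :=
  IsUnit g ∧ ∀ u : Equiv.Perm (Fin n), WminRep S0 u → InBigCell (permMat E u * g)

/-- The set `S₀(u)` (0-based). -/
def S0ofu {n : ℕ} (S0 : Set ℕ) (u : Equiv.Perm (Fin n)) : Set ℕ :=
  { i | ∃ a b : Fin n, (a : ℕ) = i ∧ (b : ℕ) = i + 1 ∧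
      (u.symm b : ℕ) = (u.symm a : ℕ) + 1 ∧ ((u.symm a : ℕ) ∈ S0) }

/-- `p` and `q` lie in the same `J`-block. -/
def SameBlock {n : ℕ} (J : Set ℕ) (p q : Fin n) : Prop :=
  ∀ k : ℕ, min (p : ℕ) (q : ℕ) ≤ k → k < max (p : ℕ) (q : ℕ) → k ∈ J

/-- `Ad_h(V) = { h X h⁻¹ : X ∈ V }`. -/
def AdSet {n : ℕ} (h : Matrix (Fin n) (Fin n) E)
    (V : Set (Matrix (Fin n) (Fin n) E)) : Set (Matrix (Fin n) (Fin n) E) :=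
  (fun x => h * x * h⁻¹) '' V

/-- The Borel subalgebra `𝔟` of upper triangular matrices. -/
def bSet (E : Type*) [Field E] (n : ℕ) : Set (Matrix (Fin n) (Fin n) E) :=
  { x | ∀ i j : Fin n, j < i → x i j = 0 }

/-- The Levi subalgebra `𝔩_J` of block-diagonal matrices. -/
def lSetJ (E : Type*) [Field E] {n : ℕ} (J : Set ℕ) : Set (Matrix (Fin n) (Fin n) E) :=
  { x | ∀ p q : Fin n, ¬ SameBlock J p q → x p q = 0 }

/-- The nilpotent radical `𝔫_J` of strictly block-upper-triangular matrices. -/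
def nSetJ (E : Type*) [Field E] {n : ℕ} (J : Set ℕ) : Set (Matrix (Fin n) (Fin n) E) :=
  { x | ∀ p q : Fin n, ¬ ((p : ℕ) < (q : ℕ) ∧ ¬ SameBlock J p q) → x p q = 0 }

/-- The parabolic subalgebra `𝔭_J = 𝔩_J + 𝔫_J`. -/
def pSetJ (E : Type*) [Field E] {n : ℕ} (J : Set ℕ) : Set (Matrix (Fin n) (Fin n) E) :=
  { x | ∃ a ∈ lSetJ E J, ∃ b ∈ nSetJ E J, x = a + b }

/-!
For `u ∈ W_n^{S₀}` write `[u] g = b w₀ b'`; then `κ_u := g b'⁻¹ w₀ = [u]⁻¹ b` conjugates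
`𝔭_{S₀(u)} ∩ 𝔟̄` into the `u`-th summand, and `Ad_{κ_1}(𝔟̄) = Ad_g(𝔟)`. So it suffices to show that
`κ_u E_pq κ_u⁻¹` lies in the sum for all `u` and all `q ≤ p`. If `a ∉ S₀(u)`, then `(a a+1) u` is
again in `W_n^{S₀}` and `κ_{(a a+1) u} = κ_u ζ` with `ζ ∈ B (a a+1) B ∩ B̄`, which forces
`ζ = D + γ E_{a+1,a}` with `D` diagonal invertible and `γ ≠ 0`. Conjugation by such a `ζ`
rescales `E_pq`, or mixes it with `E_{p-1,q}` or `E_{p,q+1}` when `a + 1 = p` or `a = q`.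
Induction on `p - q`, moving a gap of `S₀(u)` inside `[q, p)` to an end of that interval by
adjacent transpositions, then places every `κ_u E_pq κ_u⁻¹` in the sum.
-/

section Triangular

theorem blockTriangular_of_isUpperTriangular {m R α : Type*} [LinearOrder m] [Zero R]
    [Preorder α] {M : Matrix m m R} {b : m → α} (hb : Monotone b) (hM : M.IsUpperTriangular) :
    M.BlockTriangular b :=
  fun _ _ h => hM (lt_of_not_ge fun h' => (hb h').not_gt h)

variable {m R : Type*} [Fintype m] [DecidableEq m] [CommRing R]

theorem blockTriangular_nonsing_inv {α : Type*} [LinearOrder α] {M : Matrix m m R}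
    {b : m → α} (hM : M.BlockTriangular b) : M⁻¹.BlockTriangular b := by
  by_cases h : IsUnit M.det
  · have := M.invertibleOfIsUnitDet h
    exact Matrix.blockTriangular_inv_of_blockTriangular hM
  · rw [Matrix.nonsing_inv_apply_not_isUnit M h]
    exact Matrix.blockTriangular_zero

theorem IsLowerTriangular.apply_self_ne_zero [LinearOrder m] [IsDomain R]
    {M : Matrix m m R} (h : M.IsLowerTriangular) (hM : IsUnit M) (i : m) : M i i ≠ 0 := by
  have hdet := ((Matrix.isUnit_iff_isUnit_det M).1 hM).ne_zero
  rw [Matrix.det_of_isLowerTriangular M h] at hdet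
  exact Finset.prod_ne_zero_iff.1 hdet i (Finset.mem_univ i)

theorem IsUpperTriangular.apply_self_ne_zero [LinearOrder m] [IsDomain R]
    {M : Matrix m m R} (h : M.IsUpperTriangular) (hM : IsUnit M) (i : m) : M i i ≠ 0 := by
  have hdet := ((Matrix.isUnit_iff_isUnit_det M).1 hM).ne_zero
  rw [Matrix.det_of_isUpperTriangular h] at hdet
  exact Finset.prod_ne_zero_iff.1 hdet i (Finset.mem_univ i)

theorem conj_mul_eq (A B X : Matrix m m R) :
    A * B * X * (A * B)⁻¹ = A * (B * X * B⁻¹) * A⁻¹ := by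
  simp only [Matrix.mul_inv_rev, Matrix.mul_assoc]

theorem diagonal_mul_single (d : m → R) (i j : m) (c : R) :
    Matrix.diagonal d * Matrix.single i j c = Matrix.single i j (d i * c) := by
  ext k l
  by_cases hk : i = k <;> simp [Matrix.diagonal_mul, Matrix.single_apply, hk]

theorem single_mul_diagonal (d : m → R) (i j : m) (c : R) :
    Matrix.single i j c * Matrix.diagonal d = Matrix.single i j (c * d j) := by
  ext k l
  by_cases hl : j = l <;> simp [Matrix.mul_diagonal, Matrix.single_apply, hl]

end Triangular

variable {n : ℕ}

section PermMat

theorem permMat_eq_permMatrix (u : Equiv.Perm (Fin n)) : permMat E u = (u⁻¹).permMatrix E := by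
  ext i j
  simp only [permMat, Matrix.of_apply, PEquiv.toMatrix_apply, Equiv.toPEquiv_apply,
    Option.mem_some_iff, Equiv.Perm.inv_def, Equiv.symm_apply_eq]

theorem permMat_mul_apply (u : Equiv.Perm (Fin n)) (X : Matrix (Fin n) (Fin n) E) (i j : Fin n) :
    (permMat E u * X) i j = X (u⁻¹ i) j := by
  rw [permMat_eq_permMatrix, PEquiv.toMatrix_toPEquiv_mul]
  rfl

theorem mul_permMat_apply (u : Equiv.Perm (Fin n)) (X : Matrix (Fin n) (Fin n) E) (i j : Fin n) :
    (X * permMat E u) i j = X i (u j) := by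
  rw [permMat_eq_permMatrix, PEquiv.mul_toMatrix_toPEquiv]
  simp [Equiv.Perm.inv_def]

theorem permMat_mul (u v : Equiv.Perm (Fin n)) :
    permMat E (u * v) = permMat E u * permMat E v := by
  simp [permMat_eq_permMatrix]

theorem permMat_one : permMat E (1 : Equiv.Perm (Fin n)) = 1 := by
  simp [permMat_eq_permMatrix]

theorem inv_permMat (u : Equiv.Perm (Fin n)) : (permMat E u)⁻¹ = permMat E u⁻¹ :=
  Matrix.inv_eq_left_inv (by rw [← permMat_mul, inv_mul_cancel, permMat_one])

theorem isUnit_permMat (u : Equiv.Perm (Fin n)) : IsUnit (permMat E u) :=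
  (Matrix.isUnit_iff_isUnit_det _).2 <| Matrix.isUnit_det_of_left_inverse
    (by rw [← permMat_mul, inv_mul_cancel, permMat_one] : permMat E u⁻¹ * permMat E u = 1)

theorem w0Mat_eq_permMat : w0Mat E n = permMat E Fin.revPerm := by
  ext i j
  simp only [w0Mat, permMat, Matrix.of_apply, Fin.revPerm_apply, Fin.ext_iff, Fin.val_rev]
  congr 1
  apply propext
  omega

theorem w0Mat_mul_w0Mat : w0Mat E n * w0Mat E n = 1 := by
  rw [w0Mat_eq_permMat, ← permMat_mul, show (Fin.revPerm : Equiv.Perm (Fin n)) * Fin.revPerm = 1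
    from Equiv.ext Fin.rev_rev, permMat_one]

theorem w0Mat_inv : (w0Mat E n)⁻¹ = w0Mat E n :=
  Matrix.inv_eq_left_inv w0Mat_mul_w0Mat

theorem w0Mat_conj_apply (X : Matrix (Fin n) (Fin n) E) (i j : Fin n) :
    (w0Mat E n * X * w0Mat E n) i j = X i.rev j.rev := by
  rw [w0Mat_eq_permMat, mul_permMat_apply, permMat_mul_apply]
  simp

theorem IsUpperTriangular.w0Mat_conj {X : Matrix (Fin n) (Fin n) E} (hX : X.IsUpperTriangular) :
    (w0Mat E n * X * w0Mat E n).IsLowerTriangular := fun i j h => by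
  rw [w0Mat_conj_apply]
  exact hX (Fin.rev_lt_rev.2 h)

theorem IsLowerTriangular.w0Mat_conj {X : Matrix (Fin n) (Fin n) E} (hX : X.IsLowerTriangular) :
    (w0Mat E n * X * w0Mat E n).IsUpperTriangular := fun i j h => by
  rw [w0Mat_conj_apply]
  exact hX (Fin.rev_lt_rev.2 h)

end PermMat

section BorelParabolic

theorem sameBlock_self (J : Set ℕ) (p : Fin n) : SameBlock J p p :=
  fun k h₁ h₂ => by omega

theorem exists_gap_of_not_sameBlock {J : Set ℕ} {p q : Fin n} (hqp : q ≤ p)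
    (h : ¬ SameBlock J p q) : ∃ s, (q : ℕ) ≤ s ∧ s < p ∧ s ∉ J := by
  simp only [SameBlock, not_forall, exists_prop] at h
  obtain ⟨s, h₁, h₂, hs⟩ := h
  exact ⟨s, by omega, by omega, hs⟩

/-- The index of the `J`-block containing `p`. -/
def blockIndex (J : Set ℕ) (p : Fin n) : ℕ := ((Finset.range p).filter (· ∉ J)).card

theorem blockIndex_mono (J : Set ℕ) : Monotone (blockIndex (n := n) J) := fun _ _ h =>
  Finset.card_le_card (Finset.filter_subset_filter _ (Finset.range_subset_range.2 h))

theorem blockIndex_lt_blockIndex_iff {J : Set ℕ} {p q : Fin n} :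
    blockIndex J q < blockIndex J p ↔ q < p ∧ ¬ SameBlock J p q := by
  constructor
  · intro h
    have hqp : q < p := lt_of_not_ge fun hpq => (blockIndex_mono J hpq).not_gt h
    refine ⟨hqp, fun hsb => h.not_ge (Finset.card_le_card fun k hk => ?_)⟩
    simp only [Finset.mem_filter, Finset.mem_range] at hk ⊢
    refine ⟨lt_of_not_ge fun hqk => hk.2 (hsb k (by omega) (by omega)), hk.2⟩
  · rintro ⟨hqp, hsb⟩
    obtain ⟨s, hqs, hsp, hs⟩ := exists_gap_of_not_sameBlock hqp.le hsb
    refine Finset.card_lt_card ((Finset.ssubset_iff_of_subset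
      (Finset.filter_subset_filter _ (Finset.range_subset_range.2 hqp.le))).2 ⟨s, ?_, ?_⟩)
    · simp [hsp, hs]
    · simp [hs, hqs]

theorem mem_pSetJ_iff {J : Set ℕ} {x : Matrix (Fin n) (Fin n) E} :
    x ∈ pSetJ E J ↔ x.BlockTriangular (blockIndex J) := by
  simp only [Matrix.BlockTriangular, blockIndex_lt_blockIndex_iff, and_imp]
  constructor
  · rintro ⟨a, ha, b, hb, rfl⟩ p q hqp hsb
    rw [Matrix.add_apply, ha p q hsb, hb p q fun h => (lt_asymm hqp h.1).elim, add_zero]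
  · intro hx
    let a : Matrix (Fin n) (Fin n) E := Matrix.of fun p q => if SameBlock J p q then x p q else 0
    refine ⟨a, fun p q hsb => if_neg hsb, x - a, fun p q hpq => ?_, (add_sub_cancel a x).symm⟩
    by_cases hsb : SameBlock J p q
    · simp [a, hsb]
    · rcases lt_trichotomy q p with hqp | rfl | hqp
      · simp [a, hsb, hx hqp hsb]
      · exact (hsb (sameBlock_self J q)).elim
      · exact (hpq ⟨hqp, hsb⟩).elim

variable (E) in
def parabolic (J : Set ℕ) : Subalgebra E (Matrix (Fin n) (Fin n) E) :=
  Matrix.blockTriangularSubalgebra E E (blockIndex J)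

variable (E n) in
def borel : Subalgebra E (Matrix (Fin n) (Fin n) E) :=
  Matrix.blockTriangularSubalgebra E E id

theorem coe_parabolic (J : Set ℕ) :
    (parabolic (n := n) E J : Set (Matrix (Fin n) (Fin n) E)) = pSetJ E J :=
  Set.ext fun _ => mem_pSetJ_iff.symm

theorem coe_borel : (borel E n : Set (Matrix (Fin n) (Fin n) E)) = bSet E n := rfl

theorem IsBorel.mem_borel {b : Matrix (Fin n) (Fin n) E} (hb : IsBorel b) : b ∈ borel E n :=
  fun i j h => hb.2 i j h

theorem IsBorel.isUnit_det {b : Matrix (Fin n) (Fin n) E} (hb : IsBorel b) : IsUnit b.det :=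
  (Matrix.isUnit_iff_isUnit_det b).1 hb.1

theorem IsBorel.nonsing_inv {b : Matrix (Fin n) (Fin n) E} (hb : IsBorel b) : IsBorel b⁻¹ :=
  ⟨Matrix.isUnit_nonsing_inv_iff.2 hb.1, fun _ _ h => blockTriangular_nonsing_inv hb.2 h⟩

theorem borel_le_parabolic (J : Set ℕ) : borel E n ≤ parabolic E J :=
  fun _ hx => blockTriangular_of_isUpperTriangular (blockIndex_mono J) hx

theorem single_mem_parabolic {J : Set ℕ} {p q : Fin n} (h : SameBlock J p q) (c : E) :
    Matrix.single p q c ∈ parabolic E J :=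
  Matrix.blockTriangular_single (le_of_not_gt fun hlt => (blockIndex_lt_blockIndex_iff.1 hlt).2 h) c

end BorelParabolic

section BruhatCell

theorem swap_lt_swap_of_adjacent {α β v w : Fin n} (hβ : (β : ℕ) = α + 1) (hvw : v < w)
    (h : ¬(v = α ∧ w = β)) : Equiv.swap α β v < Equiv.swap α β w := by
  simp only [Fin.lt_def, Fin.ext_iff, Equiv.swap_apply_def] at *
  split_ifs <;> omega

theorem eq_of_le_swap_of_adjacent {α β i j k : Fin n} (hβ : (β : ℕ) = α + 1) (hkj : k ≤ j)
    (hji : j < i) (hik : i ≤ Equiv.swap α β k) : i = β ∧ j = α ∧ k = α := by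
  simp only [Fin.lt_def, Fin.le_def, Fin.ext_iff, Equiv.swap_apply_def] at *
  split_ifs at hik <;> omega

/-- The intersection `B s B ∩ B̄` for an adjacent transposition `s = (α β)`. -/
theorem exists_eq_diagonal_add_single {P Q : Matrix (Fin n) (Fin n) E} {α β : Fin n}
    (hβ : (β : ℕ) = α + 1) (hP : IsBorel P) (hQ : IsBorel Q)
    (hM : (P * permMat E (Equiv.swap α β) * Q).IsLowerTriangular) :
    ∃ d : Fin n → E, ∃ γ : E, (∀ i, d i ≠ 0) ∧ γ ≠ 0 ∧
      P * permMat E (Equiv.swap α β) * Q = Matrix.diagonal d + γ • Matrix.single β α 1 := by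
  generalize hMdef : P * permMat E (Equiv.swap α β) * Q = M at hM ⊢
  have hαβ : α ≠ β := fun h => by rw [Fin.ext_iff] at h; omega
  have hMapply : ∀ i j, M i j = ∑ k, P i (Equiv.swap α β k) * Q k j := fun i j => by
    rw [← hMdef, Matrix.mul_apply]
    simp_rw [mul_permMat_apply]
  have hsupp : ∀ i j k, j < i → P i (Equiv.swap α β k) * Q k j ≠ 0 → i = β ∧ j = α ∧ k = α :=
    fun i j k hji hne => eq_of_le_swap_of_adjacent hβ
      (le_of_not_gt fun h => hne (by rw [hQ.2 k j h, mul_zero]))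
      hji (le_of_not_gt fun h => hne (by rw [hP.2 _ _ h, zero_mul]))
  have hoff : ∀ i j, j < i → ¬(i = β ∧ j = α) → M i j = 0 := fun i j hji h => by
    rw [hMapply]
    exact Finset.sum_eq_zero fun k _ => by_contra fun hne => h ⟨(hsupp i j k hji hne).1,
      (hsupp i j k hji hne).2.1⟩
  have hγ : M β α = P β β * Q α α := by
    rw [hMapply, Finset.sum_eq_single α (fun k _ hk => by_contra fun hne =>
      hk (hsupp β α k (by simp [Fin.lt_def, hβ]) hne).2.2) (by simp), Equiv.swap_apply_left]
  have hMunit : IsUnit M := hMdef ▸ (hP.1.mul (isUnit_permMat _)).mul hQ.1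
  refine ⟨fun i => M i i, M β α, IsLowerTriangular.apply_self_ne_zero hM hMunit,
    hγ ▸ mul_ne_zero (IsUpperTriangular.apply_self_ne_zero hP.mem_borel hP.1 β)
      (IsUpperTriangular.apply_self_ne_zero hQ.mem_borel hQ.1 α), ?_⟩
  ext i j
  rcases lt_trichotomy j i with hji | rfl | hij
  · by_cases h : i = β ∧ j = α
    · obtain ⟨rfl, rfl⟩ := h
      simp [Matrix.diagonal_apply_ne _ hji.ne']
    · have : ¬(β = i ∧ α = j) := fun h' => h ⟨h'.1.symm, h'.2.symm⟩
      simp [hoff i j hji h, Matrix.diagonal_apply_ne _ hji.ne', this]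
  · have : ¬(β = j ∧ α = j) := fun h => hαβ (h.2.trans h.1.symm)
    simp [this]
  · have : ¬(β = i ∧ α = j) := fun h => by
      rw [← h.1, ← h.2, Fin.lt_def] at hij
      omega
    simp [hM hij, Matrix.diagonal_apply_ne _ hij.ne, this]

end BruhatCell

section AdaptedBasis

/-- The columns of `κ` form a basis adapted to the flag `[u]⁻¹ F_std` and, in reverse order, to
the flag `g F_std`. -/
def IsAdaptedBasis (g : Matrix (Fin n) (Fin n) E) (u : Equiv.Perm (Fin n))
    (κ : Matrix (Fin n) (Fin n) E) : Prop :=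
  ∃ b b', IsBorel b ∧ IsBorel b' ∧ κ = (permMat E u)⁻¹ * b ∧ κ = g * b'⁻¹ * w0Mat E n

variable {g κ : Matrix (Fin n) (Fin n) E} {u : Equiv.Perm (Fin n)}

theorem exists_isAdaptedBasis (h : InBigCell (permMat E u * g)) : ∃ κ, IsAdaptedBasis g u κ := by
  obtain ⟨b, b', hb, hb', hug⟩ := h
  refine ⟨g * b'⁻¹ * w0Mat E n, b, b', hb, hb', ?_, rfl⟩
  have hg : g = (permMat E u)⁻¹ * (b * w0Mat E n * b') := by
    rw [← hug, Matrix.nonsing_inv_mul_cancel_left _ _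
      ((Matrix.isUnit_iff_isUnit_det _).1 (isUnit_permMat u))]
  rw [hg]
  simp only [Matrix.mul_assoc]
  rw [Matrix.mul_nonsing_inv_cancel_left _ _ hb'.isUnit_det, w0Mat_mul_w0Mat, Matrix.mul_one]

theorem IsAdaptedBasis.isUnit (h : IsAdaptedBasis g u κ) : IsUnit κ := by
  obtain ⟨b, -, hb, -, rfl, -⟩ := h
  rw [inv_permMat]
  exact (isUnit_permMat _).mul hb.1

theorem IsAdaptedBasis.conj_mem_adSet_parabolic (h : IsAdaptedBasis g u κ) {J : Set ℕ}
    {X : Matrix (Fin n) (Fin n) E} (hX : X ∈ parabolic E J) :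
    κ * X * κ⁻¹ ∈ AdSet (permMat E u)⁻¹ (pSetJ E J) := by
  obtain ⟨b, -, hb, -, rfl, -⟩ := h
  refine ⟨b * X * b⁻¹, ?_, (conj_mul_eq _ _ _).symm⟩
  rw [← coe_parabolic]
  exact mul_mem (mul_mem (borel_le_parabolic J hb.mem_borel) hX)
    (borel_le_parabolic J hb.nonsing_inv.mem_borel)

theorem IsAdaptedBasis.exists_conj_eq (h : IsAdaptedBasis g u κ) : ∃ b', IsBorel b' ∧
    ∀ X, κ * X * κ⁻¹ = g * (b'⁻¹ * (w0Mat E n * X * w0Mat E n) * b') * g⁻¹ := by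
  obtain ⟨-, b', -, hb', -, rfl⟩ := h
  refine ⟨b', hb', fun X => ?_⟩
  rw [conj_mul_eq, conj_mul_eq, w0Mat_inv, Matrix.nonsing_inv_nonsing_inv _ hb'.isUnit_det]

theorem IsAdaptedBasis.conj_mem_adSet_borel (h : IsAdaptedBasis g u κ)
    {X : Matrix (Fin n) (Fin n) E} (hX : X.IsLowerTriangular) :
    κ * X * κ⁻¹ ∈ AdSet g (bSet E n) := by
  obtain ⟨b', hb', hconj⟩ := h.exists_conj_eq
  refine ⟨_, ?_, (hconj X).symm⟩
  rw [← coe_borel]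
  exact mul_mem (mul_mem hb'.nonsing_inv.mem_borel (IsLowerTriangular.w0Mat_conj hX)) hb'.mem_borel

theorem IsAdaptedBasis.exists_conj_eq_of_mem_adSet_borel (h : IsAdaptedBasis g u κ)
    {Y : Matrix (Fin n) (Fin n) E} (hY : Y ∈ AdSet g (bSet E n)) :
    ∃ X : Matrix (Fin n) (Fin n) E, X.IsLowerTriangular ∧ κ * X * κ⁻¹ = Y := by
  obtain ⟨x, hx, rfl⟩ := hY
  obtain ⟨b', hb', hconj⟩ := h.exists_conj_eq
  have hx' : b' * x * b'⁻¹ ∈ borel E n :=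
    mul_mem (mul_mem hb'.mem_borel hx) hb'.nonsing_inv.mem_borel
  refine ⟨_, IsUpperTriangular.w0Mat_conj hx', ?_⟩
  rw [hconj]
  congr 2
  simp only [← Matrix.mul_assoc, w0Mat_mul_w0Mat, Matrix.one_mul]
  simp only [Matrix.mul_assoc, w0Mat_mul_w0Mat, Matrix.mul_one]
  rw [Matrix.nonsing_inv_mul_cancel_left _ _ hb'.isUnit_det,
    Matrix.nonsing_inv_mul _ hb'.isUnit_det, Matrix.mul_one]

theorem IsAdaptedBasis.exists_eq_mul_diagonal_add_single {κ' : Matrix (Fin n) (Fin n) E}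
    {α β : Fin n} (hβ : (β : ℕ) = α + 1) (hg : IsUnit g) (h : IsAdaptedBasis g u κ)
    (h' : IsAdaptedBasis g (Equiv.swap α β * u) κ') :
    ∃ d : Fin n → E, ∃ γ : E, (∀ i, d i ≠ 0) ∧ γ ≠ 0 ∧
      κ' = κ * (Matrix.diagonal d + γ • Matrix.single β α 1) := by
  have hκ := (Matrix.isUnit_iff_isUnit_det _).1 h.isUnit
  obtain ⟨b, b', hb, hb', hκb, hκb'⟩ := h
  obtain ⟨c, c', hc, hc', hκc, hκc'⟩ := h'
  have hbruhat : κ⁻¹ * κ' = b⁻¹ * permMat E (Equiv.swap α β) * c := by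
    simp only [hκb, hκc, Matrix.mul_inv_rev, inv_permMat, inv_inv, Equiv.swap_inv,
      permMat_mul, Matrix.mul_assoc]
    rw [← Matrix.mul_assoc (permMat E u), ← permMat_mul, mul_inv_cancel, permMat_one,
      Matrix.one_mul]
  have hopp : κ⁻¹ * κ' = w0Mat E n * (b' * c'⁻¹) * w0Mat E n := by
    rw [hκb', hκc', Matrix.mul_inv_rev, Matrix.mul_inv_rev, w0Mat_inv,
      Matrix.nonsing_inv_nonsing_inv _ hb'.isUnit_det]
    simp only [Matrix.mul_assoc]
    rw [Matrix.nonsing_inv_mul_cancel_left _ _ ((Matrix.isUnit_iff_isUnit_det _).1 hg)]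
  have hlow : (b⁻¹ * permMat E (Equiv.swap α β) * c).IsLowerTriangular := by
    rw [← hbruhat, hopp]
    exact IsUpperTriangular.w0Mat_conj (mul_mem hb'.mem_borel hc'.nonsing_inv.mem_borel)
  obtain ⟨d, γ, hd, hγ, heq⟩ := exists_eq_diagonal_add_single hβ hb.nonsing_inv hc hlow
  refine ⟨d, γ, hd, hγ, ?_⟩
  rw [← heq, ← hbruhat, Matrix.mul_nonsing_inv_cancel_left _ _ hκ]

end AdaptedBasis

section Refinements

variable {S0 : Set ℕ} {u : Equiv.Perm (Fin n)} {α β : Fin n}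

theorem WminRep.swap_mul (hu : WminRep S0 u) (hβ : (β : ℕ) = α + 1)
    (hα : (α : ℕ) ∉ S0ofu S0 u) : WminRep S0 (Equiv.swap α β * u) := by
  intro i j hij hi
  refine swap_lt_swap_of_adjacent hβ (hu i j hij hi) fun ⟨hiα, hjβ⟩ => hα ?_
  refine ⟨α, β, rfl, hβ, ?_, ?_⟩
  · rw [← hiα, ← hjβ, Equiv.symm_apply_apply, Equiv.symm_apply_apply, hij]
  · rwa [← hiα, Equiv.symm_apply_apply]

theorem notMem_S0ofu_swap_mul {s : ℕ} (hβ : (β : ℕ) = α + 1) (hs : s + 1 = α)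
    (h : s ∈ S0ofu S0 u) : s ∉ S0ofu S0 (Equiv.swap α β * u) := by
  obtain ⟨a, b, ha, hb, hab, -⟩ := h
  rintro ⟨a', b', ha', hb', hab', -⟩
  rw [show a' = a from Fin.ext (by omega), show b' = α from Fin.ext (by omega)] at hab'
  rw [show b = α from Fin.ext (by omega)] at hab
  have hswap : Equiv.swap α β a = a :=
    Equiv.swap_apply_of_ne_of_ne (Fin.ne_of_val_ne (by omega)) (Fin.ne_of_val_ne (by omega))
  simp only [Equiv.Perm.mul_def, Equiv.symm_trans_apply, Equiv.symm_swap, Equiv.swap_apply_left,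
    hswap] at hab'
  have : β = α := u.symm.injective (Fin.ext (by omega))
  omega

end Refinements

section Fern

/-- Conjugation by `ζ` maps `F'` into `F`; phrased as an intertwining so that `ζ` need not be
inverted. -/
def ConjMapsTo (ζ : Matrix (Fin n) (Fin n) E) (F' F : Submodule E (Matrix (Fin n) (Fin n) E)) :
    Prop :=
  ∀ X Y, ζ * Y = X * ζ → Y ∈ F' → X ∈ F

namespace ConjMapsTo

variable {d : Fin n → E} {γ : E} {α β p q : Fin n} {F' F : Submodule E (Matrix (Fin n) (Fin n) E)}

theorem single_mem (h : ConjMapsTo (Matrix.diagonal d + γ • Matrix.single β α 1) F' F)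
    (hd : ∀ i, d i ≠ 0) (hp : p ≠ α) (hq : q ≠ β) (hY : Matrix.single p q 1 ∈ F') :
    Matrix.single p q 1 ∈ F := by
  refine h _ (Matrix.single p q (d q / d p)) ?_ ?_
  · simp [Matrix.add_mul, Matrix.mul_add, diagonal_mul_single, single_mul_diagonal, hp.symm, hq,
      mul_div_cancel₀ _ (hd p)]
  · simpa using F'.smul_mem (d q / d p) hY

theorem single_mem_of_row (h : ConjMapsTo (Matrix.diagonal d + γ • Matrix.single β α 1) F' F)
    (hγ : γ ≠ 0) (hq : q ≠ β) (hF : Matrix.single α q 1 ∈ F)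
    (hF' : Matrix.single α q 1 ∈ F') : Matrix.single β q 1 ∈ F := by
  have hX := h (Matrix.single α q (d α / γ) + Matrix.single β q 1) (Matrix.single α q (d q / γ))
    (by simp [Matrix.add_mul, Matrix.mul_add, diagonal_mul_single, single_mul_diagonal, hq,
      mul_div_cancel₀ _ hγ]; ring_nf) (by simpa using F'.smul_mem (d q / γ) hF')
  simpa using F.sub_mem hX (F.smul_mem (d α / γ) hF)

theorem single_mem_of_col (h : ConjMapsTo (Matrix.diagonal d + γ • Matrix.single β α 1) F' F)
    (hd : ∀ i, d i ≠ 0) (hγ : γ ≠ 0) (hαβ : α ≠ β) (hp : p ≠ α)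
    (hF : Matrix.single p β 1 ∈ F) (hF' : Matrix.single p β 1 ∈ F') :
    Matrix.single p α 1 ∈ F := by
  have hX := h (Matrix.single p α 1 + Matrix.single p β (-(d α / γ)))
    (Matrix.single p β (-(d α / γ) * d β / d p))
    (by simp [Matrix.add_mul, Matrix.mul_add, diagonal_mul_single, single_mul_diagonal, hp.symm,
      hαβ, add_right_comm _ (Matrix.single p β _), ← Matrix.single_add]
        field_simp
        rw [add_neg_cancel, mul_zero, Matrix.single_zero, zero_add, mul_assoc,
          mul_div_mul_left _ _ (hd p)]) (by simpa using F'.smul_mem (-(d α / γ) * d β / d p) hF')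
  have := F.sub_mem hX (F.smul_mem (-(d α / γ)) hF)
  rwa [Matrix.smul_single, smul_eq_mul, mul_one, add_sub_cancel_right] at this

end ConjMapsTo

/-- The properties of `F u = Ad_{κ_u}⁻¹ (Σ)` that drive the induction. -/
structure IsFernFamily (S0 : Set ℕ)
    (F : Equiv.Perm (Fin n) → Submodule E (Matrix (Fin n) (Fin n) E)) : Prop where
  single_mem_of_sameBlock : ∀ u, WminRep S0 u → ∀ p q : Fin n, q ≤ p →
    SameBlock (S0ofu S0 u) p q → Matrix.single p q 1 ∈ F u
  conjMapsTo_swap_mul : ∀ u, WminRep S0 u → ∀ α β : Fin n, (β : ℕ) = α + 1 →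
    (α : ℕ) ∉ S0ofu S0 u → ∃ d : Fin n → E, ∃ γ : E, (∀ i, d i ≠ 0) ∧ γ ≠ 0 ∧
      ConjMapsTo (Matrix.diagonal d + γ • Matrix.single β α 1) (F (Equiv.swap α β * u)) (F u)

namespace IsFernFamily

variable {S0 : Set ℕ} {F : Equiv.Perm (Fin n) → Submodule E (Matrix (Fin n) (Fin n) E)}

/-- A gap `s ∉ S₀(u)` at an end of `[q, p)` lets the `ζ` of the refinement `(s s+1) u` mix `E_pq`
with a shorter elementary matrix; an interior gap is moved down by one, since swapping across it
only rescales `E_pq` and opens the gap `s - 1`. -/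
theorem single_mem_of_gap (hF : IsFernFamily S0 F) {k : ℕ}
    (ih : ∀ p q : Fin n, (p : ℕ) = q + k → ∀ v, WminRep S0 v → Matrix.single p q 1 ∈ F v)
    {p q : Fin n} (hpq : (p : ℕ) = q + (k + 1)) (s : ℕ) (hqs : (q : ℕ) ≤ s) (hsp : s < p)
    {u : Equiv.Perm (Fin n)} (hu : WminRep S0 u) (hs : s ∉ S0ofu S0 u) :
    Matrix.single p q 1 ∈ F u := by
  induction s using Nat.strong_induction_on generalizing u with
  | _ s ihs =>
  have hs1 : s + 1 < n := by omega
  obtain ⟨d, γ, hd, hγ, hζ⟩ := hF.conjMapsTo_swap_mul u hu ⟨s, by omega⟩ ⟨s + 1, hs1⟩ rfl hs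
  have hu' := hu.swap_mul (α := ⟨s, by omega⟩) (β := ⟨s + 1, hs1⟩) rfl hs
  rcases eq_or_lt_of_le hqs with rfl | hqs
  · exact hζ.single_mem_of_col hd hγ (Fin.ne_of_val_ne (by simp))
      (Fin.ne_of_val_ne (by simp; omega))
      (ih _ _ (by simp; omega) u hu) (ih _ _ (by simp; omega) _ hu')
  by_cases hsp' : s + 1 = p
  · obtain rfl : (⟨s + 1, hs1⟩ : Fin n) = p := Fin.ext hsp'
    exact hζ.single_mem_of_row hγ (Fin.ne_of_val_ne (by simp; omega))
      (ih _ _ (by simp; omega) u hu) (ih _ _ (by simp; omega) _ hu')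
  obtain ⟨s, rfl⟩ : ∃ s', s = s' + 1 := ⟨s - 1, by omega⟩
  by_cases hs' : s ∈ S0ofu S0 u
  · exact hζ.single_mem hd (Fin.ne_of_val_ne (by simp; omega)) (Fin.ne_of_val_ne (by simp; omega))
      (ihs s (by omega) (by omega) (by omega) hu' (notMem_S0ofu_swap_mul rfl rfl hs'))
  · exact ihs s (by omega) (by omega) (by omega) hu hs'

theorem single_mem (hF : IsFernFamily S0 F) {u : Equiv.Perm (Fin n)} (hu : WminRep S0 u)
    {p q : Fin n} (hqp : q ≤ p) : Matrix.single p q 1 ∈ F u := by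
  obtain ⟨k, hk⟩ : ∃ k, (p : ℕ) = q + k := ⟨p - q, by rw [Fin.le_def] at hqp; omega⟩
  induction k generalizing p q u with
  | zero =>
    obtain rfl : p = q := Fin.ext hk
    exact hF.single_mem_of_sameBlock u hu p p le_rfl (sameBlock_self _ p)
  | succ k ih =>
    by_cases hsb : SameBlock (S0ofu S0 u) p q
    · exact hF.single_mem_of_sameBlock u hu p q hqp hsb
    obtain ⟨s, hqs, hsp, hs⟩ := exists_gap_of_not_sameBlock hqp hsb
    exact hF.single_mem_of_gap (fun p' q' h v hv => ih hv (by rw [Fin.le_def]; omega) h) hk s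
      hqs hsp hu hs

theorem mem_of_isLowerTriangular (hF : IsFernFamily S0 F) {u : Equiv.Perm (Fin n)}
    (hu : WminRep S0 u) {X : Matrix (Fin n) (Fin n) E} (hX : X.IsLowerTriangular) : X ∈ F u := by
  rw [Matrix.matrix_eq_sum_single X]
  refine Submodule.sum_mem _ fun i _ => Submodule.sum_mem _ fun j _ => ?_
  rcases le_or_gt j i with hji | hij
  · simpa using (F u).smul_mem (X i j) (hF.single_mem hu hji)
  · simp [hX hij]

end IsFernFamily

end Fern

section Assembly

theorem mem_iSup_iff_exists_sum {ι R M : Type*} [Fintype ι] [Semiring R] [AddCommMonoid M]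
    [Module R M] (p : ι → Submodule R M) (x : M) :
    x ∈ ⨆ i, p i ↔ ∃ X : ι → M, (∀ i, X i ∈ p i) ∧ ∑ i, X i = x := by
  rw [Submodule.mem_iSup_iff_exists_finsupp]
  constructor
  · rintro ⟨f, hf, rfl⟩
    exact ⟨f, hf, (f.sum_fintype (fun _ x => x) fun _ => rfl).symm⟩
  · rintro ⟨X, hX, rfl⟩
    exact ⟨Finsupp.equivFunOnFinite.symm X, hX, Finsupp.sum_fintype _ _ fun _ => rfl⟩

def conjLinear (h : Matrix (Fin n) (Fin n) E) :
    Matrix (Fin n) (Fin n) E →ₗ[E] Matrix (Fin n) (Fin n) E :=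
  LinearMap.mulRight E h⁻¹ ∘ₗ LinearMap.mulLeft E h

@[simp]
theorem conjLinear_apply (h X : Matrix (Fin n) (Fin n) E) : conjLinear h X = h * X * h⁻¹ := rfl

theorem coe_map_conjLinear (h : Matrix (Fin n) (Fin n) E)
    (V : Submodule E (Matrix (Fin n) (Fin n) E)) :
    (V.map (conjLinear h) : Set (Matrix (Fin n) (Fin n) E)) = AdSet h V :=
  Submodule.map_coe _ _

theorem conjMapsTo_comap_conjLinear (T : Submodule E (Matrix (Fin n) (Fin n) E))
    {κ κ' ζ : Matrix (Fin n) (Fin n) E} (hκ' : IsUnit κ') (h : κ' = κ * ζ) :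
    ConjMapsTo ζ (T.comap (conjLinear κ')) (T.comap (conjLinear κ)) := by
  intro X Y hXY hY
  have hζ : IsUnit ζ.det := by
    rw [Matrix.isUnit_iff_isUnit_det, h, Matrix.det_mul] at hκ'
    exact isUnit_of_mul_isUnit_right hκ'
  simp only [Submodule.mem_comap, conjLinear_apply] at hY ⊢
  rwa [h, conj_mul_eq, hXY, Matrix.mul_nonsing_inv_cancel_right _ _ hζ] at hY

variable {S0 : Set ℕ} {g : Matrix (Fin n) (Fin n) E}

def fernSummand (S0 : Set ℕ) (g : Matrix (Fin n) (Fin n) E) (u : Equiv.Perm (Fin n)) :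
    Submodule E (Matrix (Fin n) (Fin n) E) :=
  if WminRep S0 u then
    (parabolic E (S0ofu S0 u)).toSubmodule.map (conjLinear (permMat E u)⁻¹) ⊓
      (borel E n).toSubmodule.map (conjLinear g)
  else ⊥

theorem mem_fernSummand_iff {u : Equiv.Perm (Fin n)} {X : Matrix (Fin n) (Fin n) E} :
    X ∈ fernSummand S0 g u ↔
      (WminRep S0 u → X ∈ AdSet (permMat E u)⁻¹ (pSetJ E (S0ofu S0 u)) ∩ AdSet g (bSet E n)) ∧
        (¬ WminRep S0 u → X = 0) := by
  unfold fernSummand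
  split_ifs with hu
  · simp only [← SetLike.mem_coe, Submodule.coe_inf, coe_map_conjLinear,
      Subalgebra.coe_toSubmodule, coe_parabolic, coe_borel, hu, true_implies, not_true,
      false_implies, and_true]
  · simp [hu]

theorem isFernFamily_comap (hg : IsUnit g) {κ : Equiv.Perm (Fin n) → Matrix (Fin n) (Fin n) E}
    (hκ : ∀ u, WminRep S0 u → IsAdaptedBasis g u (κ u)) :
    IsFernFamily S0 fun u => (⨆ v, fernSummand S0 g v).comap (conjLinear (κ u)) where
  single_mem_of_sameBlock u hu p q hqp hsb :=
    Submodule.mem_iSup_of_mem u <| mem_fernSummand_iff.2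
      ⟨fun _ => ⟨(hκ u hu).conj_mem_adSet_parabolic (single_mem_parabolic hsb 1),
        (hκ u hu).conj_mem_adSet_borel (Matrix.blockTriangular_single' hqp 1)⟩,
      fun h => (h hu).elim⟩
  conjMapsTo_swap_mul u hu α β hβ hα := by
    have hu' := hκ _ (hu.swap_mul hβ hα)
    obtain ⟨d, γ, hd, hγ, heq⟩ := (hκ u hu).exists_eq_mul_diagonal_add_single hβ hg hu'
    exact ⟨d, γ, hd, hγ, conjMapsTo_comap_conjLinear _ hu'.isUnit heq⟩

theorem iSup_fernSummand_eq (hg : NonCritical S0 g) :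
    ⨆ u, fernSummand S0 g u = (borel E n).toSubmodule.map (conjLinear g) := by
  have hκ : ∀ u, ∃ κ, WminRep S0 u → IsAdaptedBasis g u κ := fun u => by
    by_cases hu : WminRep S0 u
    · exact (exists_isAdaptedBasis (hg.2 u hu)).imp fun _ h _ => h
    · exact ⟨0, fun h => (hu h).elim⟩
  choose κ hκ using hκ
  have h1 : WminRep S0 (1 : Equiv.Perm (Fin n)) := fun i j hij _ => by simp [Fin.lt_def, hij]
  refine le_antisymm (iSup_le fun u => ?_) fun Y hY => ?_
  · unfold fernSummand
    split_ifs
    exacts [inf_le_right, bot_le]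
  · rw [← SetLike.mem_coe, coe_map_conjLinear, Subalgebra.coe_toSubmodule, coe_borel] at hY
    obtain ⟨X, hX, rfl⟩ := (hκ 1 h1).exists_conj_eq_of_mem_adSet_borel hY
    exact (isFernFamily_comap hg.1 hκ).mem_of_isLowerTriangular h1 hX

end Assembly

/-- The left-hand side is the sum of the subspaces, written as the set of all sums of families
`(X_u)_{u ∈ W_n^{S₀}}` with `X_u ∈ Ad_{[u]⁻¹}(𝔭_{S₀(u)}) ∩ Ad_g(𝔟)`. -/
theorem statement5_general
    {n : ℕ} (S0 : Set ℕ)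
    (g : Matrix (Fin n) (Fin n) E) (hg : NonCritical S0 g) :
    { Y : Matrix (Fin n) (Fin n) E |
        ∃ X : Equiv.Perm (Fin n) → Matrix (Fin n) (Fin n) E,
          (∀ u, WminRep S0 u →
            X u ∈ AdSet (permMat E u)⁻¹ (pSetJ E (S0ofu S0 u)) ∩ AdSet g (bSet E n)) ∧
          (∀ u, ¬ WminRep S0 u → X u = 0) ∧
          ∑ u : Equiv.Perm (Fin n), X u = Y }
      = AdSet g (bSet E n) := by
  have hsum : AdSet g (bSet E n) = ↑(⨆ u, fernSummand S0 g u) := by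
    rw [iSup_fernSummand_eq hg, coe_map_conjLinear, Subalgebra.coe_toSubmodule, coe_borel]
  conv_rhs => rw [hsum]
  ext Y
  simp only [Set.mem_ofPred_eq, SetLike.mem_coe, mem_iSup_iff_exists_sum, mem_fernSummand_iff,
    forall_and, and_assoc]

/-- infinite fern.  For `g` non-critical of type `S₀`,
`Σ_{u ∈ W_n^{S₀}} ( Ad_{[u]⁻¹}(𝔭_{S₀(u)}) ∩ Ad_g(𝔟) ) = Ad_g(𝔟)` as subspaces of
`M_n(E)`; the left-hand side is written as the set of all sums of families
`(X_u)_{u ∈ W_n^{S₀}}` with `X_u ∈ Ad_{[u]⁻¹}(𝔭_{S₀(u)}) ∩ Ad_g(𝔟)`. -/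
theorem statement5
    {n : ℕ} (S0 : Set ℕ) (hS0 : ∀ i ∈ S0, i + 1 < n)
    (g : Matrix (Fin n) (Fin n) E) (hg : NonCritical S0 g) :
    { Y : Matrix (Fin n) (Fin n) E |
        ∃ X : Equiv.Perm (Fin n) → Matrix (Fin n) (Fin n) E,
          (∀ u, WminRep S0 u →
            X u ∈ AdSet (permMat E u)⁻¹ (pSetJ E (S0ofu S0 u)) ∩ AdSet g (bSet E n)) ∧
          (∀ u, ¬ WminRep S0 u → X u = 0) ∧
          ∑ u : Equiv.Perm (Fin n), X u = Y }
      = AdSet g (bSet E n) :=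
  statement5_general S0 g hg

end Stmt5
end
end

section
/- For every u ∈ W_n^{S₀} and every g ∈ GL_n(E) non-critical of type S₀, the class of π_{S₀(u)}(n_u)·w_{0,S₀(u)} in the double-coset space Z_{S₀(u)}\L_{S₀(u)}/L_{S₀(u)}^B depends only on the double coset Z_{S₀}gB and not on the chosen representative g; consequently p_ref := (p_ref,u)_{u ∈ W_n^{S₀}} is a well-defined map on Φ_nc(S₀). (This is the paper's claim that the refinement map p_ref : Φ_nc(S₀) → ∏_u Φ_{nc,S₀(u)}(S₀(u)) is a well-defined morphism.) -/
/-!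
Statement 7: the refinement map `p_ref,u` is well defined on the double-coset space
`Φ_nc(S₀) = Z_{S₀} \ {non-critical g} / B`: its value does not depend on the chosen
representative `g` of the double coset.  All indexing is 0-based.
-/

open scoped Classical

noncomputable section

namespace Stmt7

/-- The permutation matrix `[u]`, characterized by `[u] · eⱼ = e_{u j}`. -/
def permMat (E : Type*) [Field E] {n : ℕ} (u : Equiv.Perm (Fin n)) :
    Matrix (Fin n) (Fin n) E :=
  Matrix.of fun i j => if i = u j then 1 else 0

/-- The antidiagonal permutation matrix `w₀`. -/
def w0Mat (E : Type*) [Field E] (n : ℕ) : Matrix (Fin n) (Fin n) E :=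
  Matrix.of fun i j => if (i : ℕ) + (j : ℕ) + 1 = n then 1 else 0

variable {E : Type*} [Field E]

/-- Membership in the Borel subgroup `B` of invertible upper triangular matrices. -/
def IsBorel {n : ℕ} (b : Matrix (Fin n) (Fin n) E) : Prop :=
  IsUnit b ∧ ∀ i j : Fin n, j < i → b i j = 0

/-- Upper triangular unipotent matrices (the group `N`). -/
def IsUniUpper {n : ℕ} (m : Matrix (Fin n) (Fin n) E) : Prop :=
  (∀ i j : Fin n, j < i → m i j = 0) ∧ ∀ i : Fin n, m i i = 1

/-- Membership in the big Bruhat cell `B w₀ B`. -/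
def InBigCell {n : ℕ} (g : Matrix (Fin n) (Fin n) E) : Prop :=
  ∃ b b' : Matrix (Fin n) (Fin n) E, IsBorel b ∧ IsBorel b' ∧ g = b * w0Mat E n * b'

/-- `u ∈ W_n^{S₀}` (0-based). -/
def WminRep {n : ℕ} (S0 : Set ℕ) (u : Equiv.Perm (Fin n)) : Prop :=
  ∀ i j : Fin n, (j : ℕ) = (i : ℕ) + 1 → (i : ℕ) ∈ S0 → u i < u j

/-- `g ∈ GL_n(E)` is non-critical of type `S₀`. -/
def NonCritical {n : ℕ} (S0 : Set ℕ) (g : Matrix (Fin n) (Fin n) E) : Prop :=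
  IsUnit g ∧ ∀ u : Equiv.Perm (Fin n), WminRep S0 u → InBigCell (permMat E u * g)

/-- The set `S₀(u)` (0-based). -/
def S0ofu {n : ℕ} (S0 : Set ℕ) (u : Equiv.Perm (Fin n)) : Set ℕ :=
  { i | ∃ a b : Fin n, (a : ℕ) = i ∧ (b : ℕ) = i + 1 ∧
      (u.symm b : ℕ) = (u.symm a : ℕ) + 1 ∧ ((u.symm a : ℕ) ∈ S0) }

/-- `p` and `q` lie in the same `J`-block. -/
def SameBlock {n : ℕ} (J : Set ℕ) (p q : Fin n) : Prop :=
  ∀ k : ℕ, min (p : ℕ) (q : ℕ) ≤ k → k < max (p : ℕ) (q : ℕ) → k ∈ J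

/-- Membership in the standard Levi subgroup `L_J`. -/
def InLevi {n : ℕ} (J : Set ℕ) (g : Matrix (Fin n) (Fin n) E) : Prop :=
  IsUnit g ∧ ∀ p q : Fin n, ¬ SameBlock J p q → g p q = 0

/-- Membership in the centre `Z_J` of `L_J`. -/
def InCenterLevi {n : ℕ} (J : Set ℕ) (g : Matrix (Fin n) (Fin n) E) : Prop :=
  IsUnit g ∧ (∀ p q : Fin n, p ≠ q → g p q = 0) ∧
    ∀ p q : Fin n, SameBlock J p q → g p p = g q q

/-- Membership in `L_J^B = L_J ∩ B`. -/
def InLeviB {n : ℕ} (J : Set ℕ) (g : Matrix (Fin n) (Fin n) E) : Prop :=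
  InLevi J g ∧ ∀ i j : Fin n, j < i → g i j = 0

/-- The first index of the `J`-block containing `p`. -/
def blockStart (J : Set ℕ) (p : ℕ) : ℕ :=
  sInf {m : ℕ | m ≤ p ∧ ∀ k, m ≤ k → k < p → k ∈ J}

/-- The last index of the `J`-block containing `p`. -/
def blockEnd (n : ℕ) (J : Set ℕ) (p : ℕ) : ℕ :=
  sSup {m : ℕ | m < n ∧ ∀ k, p ≤ k → k < m → k ∈ J}

/-- The permutation matrix `w_{0,J}` reversing every `J`-block. -/
def w0Blk (E : Type*) [Field E] (n : ℕ) (J : Set ℕ) : Matrix (Fin n) (Fin n) E :=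
  Matrix.of fun i j =>
    if (i : ℕ) + (j : ℕ) = blockStart J (j : ℕ) + blockEnd n J (j : ℕ) then 1 else 0

/-- `π_J(m)`: the block-diagonal part of `m`. -/
def blockPart {n : ℕ} (J : Set ℕ) (m : Matrix (Fin n) (Fin n) E) :
    Matrix (Fin n) (Fin n) E :=
  Matrix.of fun i j => if SameBlock J i j then m i j else 0

/-- Equality of the classes of `x`, `y` in `Z_J \ L_J / L_J^B`. -/
def LeviCosetEq {n : ℕ} (J : Set ℕ) (x y : Matrix (Fin n) (Fin n) E) : Prop :=
  ∃ z c : Matrix (Fin n) (Fin n) E, InCenterLevi J z ∧ InLeviB J c ∧ y = z * x * c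

section Helpers

variable {n : ℕ}

lemma permMat_mul_apply (u : Equiv.Perm (Fin n)) (M : Matrix (Fin n) (Fin n) E)
    (i j : Fin n) : (permMat E u * M) i j = M (u.symm i) j := by
  rw [Matrix.mul_apply, Finset.sum_eq_single (u.symm i)]
  · simp [permMat]
  · intro k _ hk
    have : i ≠ u k := fun h => hk (by rw [h, Equiv.symm_apply_apply])
    simp [permMat, this]
  · intro h; exact absurd (Finset.mem_univ _) h

lemma mul_permMat_apply (M : Matrix (Fin n) (Fin n) E) (u : Equiv.Perm (Fin n))
    (i j : Fin n) : (M * permMat E u) i j = M i (u j) := by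
  rw [Matrix.mul_apply, Finset.sum_eq_single (u j)]
  · simp [permMat]
  · intro k _ hk; simp [permMat, hk]
  · intro h; exact absurd (Finset.mem_univ _) h

lemma w0Mat_eq : w0Mat E n = permMat E (Fin.revPerm (n := n)) := by
  ext i j
  have hi := i.isLt
  have hj := j.isLt
  simp only [w0Mat, permMat, Matrix.of_apply, Fin.revPerm_apply]
  by_cases h : (i : ℕ) + (j : ℕ) + 1 = n
  · have he : i = Fin.rev j := Fin.ext (by rw [Fin.val_rev]; omega)
    rw [if_pos h, if_pos he]
  · have he : i ≠ Fin.rev j := fun hc => h (by rw [hc] at h ⊢; rw [Fin.val_rev]; omega)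
    rw [if_neg h, if_neg he]

lemma permMat_mul_diagonal (u : Equiv.Perm (Fin n)) (d : Fin n → E) :
    permMat E u * Matrix.diagonal d
      = Matrix.diagonal (fun i => d (u.symm i)) * permMat E u := by
  ext i j
  rw [permMat_mul_apply, Matrix.diagonal_mul]
  by_cases h : u.symm i = j
  · have h' : i = u j := by rw [← h, Equiv.apply_symm_apply]
    simp [Matrix.diagonal_apply, h, h', permMat]
  · have h' : i ≠ u j := fun he => h (by rw [he, Equiv.symm_apply_apply])
    simp [Matrix.diagonal_apply, h, h', permMat]

lemma UT_mul {A B : Matrix (Fin n) (Fin n) E}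
    (hA : ∀ i j : Fin n, j < i → A i j = 0) (hB : ∀ i j : Fin n, j < i → B i j = 0) :
    ∀ i j : Fin n, j < i → (A * B) i j = 0 := by
  intro i j hij
  rw [Matrix.mul_apply]
  apply Finset.sum_eq_zero
  intro k _
  rcases lt_or_ge k i with h | h
  · rw [hA i k h, zero_mul]
  · rw [hB k j (lt_of_lt_of_le hij h), mul_zero]

lemma UT_mul_diag {A B : Matrix (Fin n) (Fin n) E}
    (hA : ∀ i j : Fin n, j < i → A i j = 0) (hB : ∀ i j : Fin n, j < i → B i j = 0)
    (i : Fin n) : (A * B) i i = A i i * B i i := by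
  rw [Matrix.mul_apply, Finset.sum_eq_single i]
  · intro k _ hk
    rcases lt_or_gt_of_ne hk with h | h
    · rw [hA i k h, zero_mul]
    · rw [hB k i h, mul_zero]
  · intro h; exact absurd (Finset.mem_univ _) h

lemma UT_inv {A : Matrix (Fin n) (Fin n) E}
    (hA : ∀ i j : Fin n, j < i → A i j = 0) (hdet : IsUnit A.det) :
    ∀ i j : Fin n, j < i → A⁻¹ i j = 0 := by
  haveI := A.invertibleOfIsUnitDet hdet
  have hbt : A.BlockTriangular id := fun i j h => hA i j h
  intro i j hij
  exact Matrix.blockTriangular_inv_of_blockTriangular hbt hij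

lemma det_uniUpper {A : Matrix (Fin n) (Fin n) E} (h : IsUniUpper A) : A.det = 1 := by
  rw [Matrix.det_of_upperTriangular (fun i j hij => h.1 i j hij)]
  simp [h.2]

lemma UT_inv_diag {A : Matrix (Fin n) (Fin n) E} (h : IsUniUpper A) (i : Fin n) :
    A⁻¹ i i = 1 := by
  have hdet : IsUnit A.det := by rw [det_uniUpper h]; exact isUnit_one
  have hmul : A * A⁻¹ = 1 := Matrix.mul_nonsing_inv A hdet
  have h2 := congrArg (fun M : Matrix (Fin n) (Fin n) E => M i i) hmul
  rw [UT_mul_diag h.1 (UT_inv h.1 hdet) i, h.2 i, one_mul, Matrix.one_apply_eq] at h2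
  exact h2

/-- Uniqueness of the unipotent part in `N w₀ B`. -/
lemma nu_unique {m1 m2 b1 b2 : Matrix (Fin n) (Fin n) E}
    (h1 : IsUniUpper m1) (h2 : IsUniUpper m2) (hb1 : IsBorel b1) (hb2 : IsBorel b2)
    (heq : m1 * w0Mat E n * b1 = m2 * w0Mat E n * b2) : m1 = m2 := by
  have hdet2 : IsUnit m2.det := by rw [det_uniUpper h2]; exact isUnit_one
  have hdet1b : IsUnit b1.det := (Matrix.isUnit_iff_isUnit_det b1).mp hb1.1
  have hm2inv : m2⁻¹ * m2 = 1 := Matrix.nonsing_inv_mul m2 hdet2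
  have hm2inv' : m2 * m2⁻¹ = 1 := Matrix.mul_nonsing_inv m2 hdet2
  have hb1inv : b1 * b1⁻¹ = 1 := Matrix.mul_nonsing_inv b1 hdet1b
  set c : Matrix (Fin n) (Fin n) E := b2 * b1⁻¹ with hc
  set m : Matrix (Fin n) (Fin n) E := m2⁻¹ * m1 with hm
  have hUTc : ∀ i j : Fin n, j < i → c i j = 0 := UT_mul hb2.2 (UT_inv hb1.2 hdet1b)
  have e1 : m1 * w0Mat E n = m2 * w0Mat E n * c := by
    have h := congrArg (fun X : Matrix (Fin n) (Fin n) E => X * b1⁻¹) heq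
    rw [mul_assoc (m1 * w0Mat E n) b1 b1⁻¹, hb1inv, mul_one,
        mul_assoc (m2 * w0Mat E n) b2 b1⁻¹, ← hc] at h
    exact h
  have hmw : m * w0Mat E n = w0Mat E n * c :=
    calc m * w0Mat E n = m2⁻¹ * (m1 * w0Mat E n) := by rw [hm, mul_assoc]
      _ = m2⁻¹ * (m2 * w0Mat E n * c) := by rw [e1]
      _ = (m2⁻¹ * m2) * (w0Mat E n * c) := by simp only [mul_assoc]
      _ = w0Mat E n * c := by rw [hm2inv, one_mul]
  have hm_upper : ∀ i j : Fin n, i < j → m i j = 0 := by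
    intro i j hij
    have h := congrArg (fun X : Matrix (Fin n) (Fin n) E => X i (Fin.rev j)) hmw
    simp only [w0Mat_eq] at h
    rw [mul_permMat_apply, permMat_mul_apply] at h
    simp only [Fin.revPerm_symm, Fin.revPerm_apply, Fin.rev_rev] at h
    rw [h]
    exact hUTc _ _ (by rwa [Fin.rev_lt_rev])
  have hm_low : ∀ i j : Fin n, j < i → m i j = 0 :=
    UT_mul (UT_inv h2.1 hdet2) h1.1
  have hm_diag : ∀ i : Fin n, m i i = 1 := by
    intro i
    rw [hm, UT_mul_diag (UT_inv h2.1 hdet2) h1.1 i, UT_inv_diag h2 i, h1.2 i, one_mul]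
  have hm1 : m = 1 := by
    ext i j
    rcases lt_trichotomy i j with h | h | h
    · rw [hm_upper i j h, Matrix.one_apply_ne (ne_of_lt h)]
    · rw [h, hm_diag j, Matrix.one_apply_eq]
    · rw [hm_low i j h, Matrix.one_apply_ne (ne_of_gt h)]
  calc m1 = (m2 * m2⁻¹) * m1 := by rw [hm2inv', one_mul]
    _ = m2 * m := by rw [mul_assoc, hm]
    _ = m2 := by rw [hm1, mul_one]

lemma diagonal_mul_inv_one {d : Fin n → E} (h : ∀ p, d p ≠ 0) :
    Matrix.diagonal d * Matrix.diagonal (fun p => (d p)⁻¹) = 1 := by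
  ext i j
  by_cases hij : i = j
  · subst hij
    simp [mul_inv_cancel₀ (h i)]
  · simp [Matrix.diagonal_apply_ne _ hij, Matrix.one_apply_ne hij, hij]

lemma diagonal_inv_mul_one {d : Fin n → E} (h : ∀ p, d p ≠ 0) :
    Matrix.diagonal (fun p => (d p)⁻¹) * Matrix.diagonal d = 1 := by
  ext i j
  by_cases hij : i = j
  · subst hij
    simp [inv_mul_cancel₀ (h i)]
  · simp [Matrix.diagonal_apply_ne _ hij, Matrix.one_apply_ne hij, hij]

lemma isUnit_diagonal_of_ne {d : Fin n → E} (h : ∀ p, d p ≠ 0) :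
    IsUnit (Matrix.diagonal d) :=
  ⟨⟨_, _, diagonal_mul_inv_one h, diagonal_inv_mul_one h⟩, rfl⟩

lemma blockStart_spec (J : Set ℕ) (p : ℕ) :
    blockStart J p ≤ p ∧ ∀ k, blockStart J p ≤ k → k < p → k ∈ J := by
  have h : blockStart J p ∈ {m : ℕ | m ≤ p ∧ ∀ k, m ≤ k → k < p → k ∈ J} :=
    Nat.sInf_mem ⟨p, ⟨le_refl p, fun k hk hk' => absurd hk' (Nat.not_lt.mpr hk)⟩⟩
  exact h

lemma blockEnd_spec (J : Set ℕ) (p : ℕ) (hp : p < n) :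
    (blockEnd n J p < n ∧ ∀ k, p ≤ k → k < blockEnd n J p → k ∈ J)
      ∧ p ≤ blockEnd n J p := by
  have hmem : p ∈ {m : ℕ | m < n ∧ ∀ k, p ≤ k → k < m → k ∈ J} :=
    ⟨hp, fun k h1 h2 => absurd h2 (Nat.not_lt.mpr h1)⟩
  have hbdd : BddAbove {m : ℕ | m < n ∧ ∀ k, p ≤ k → k < m → k ∈ J} :=
    ⟨n, fun m hm => le_of_lt hm.1⟩
  exact ⟨Nat.sSup_mem ⟨p, hmem⟩ hbdd, le_csSup hbdd hmem⟩

lemma w0Blk_sameBlock {J : Set ℕ} {p q : Fin n} (h : w0Blk E n J p q ≠ 0) :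
    SameBlock J p q := by
  have hcond : (p : ℕ) + (q : ℕ) = blockStart J (q : ℕ) + blockEnd n J (q : ℕ) := by
    by_contra hc
    exact h (by simp [w0Blk, hc])
  obtain ⟨hs_le, hs_mem⟩ := blockStart_spec J (q : ℕ)
  obtain ⟨⟨he_lt, he_mem⟩, hq_le⟩ := blockEnd_spec (n := n) J (q : ℕ) q.isLt
  intro k h1 h2
  rcases lt_or_ge k (q : ℕ) with h' | h'
  · exact hs_mem k (by omega) h'
  · exact he_mem k h' (by omega)

lemma dconst {S0 : Set ℕ} {u : Equiv.Perm (Fin n)} {d : Fin n → E}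
    (hd : ∀ a b : Fin n, SameBlock S0 a b → d a = d b) :
    ∀ p q : Fin n, SameBlock (S0ofu S0 u) p q → d (u.symm p) = d (u.symm q) := by
  have key : ∀ c : ℕ, ∀ p q : Fin n, (q : ℕ) = (p : ℕ) + c →
      (∀ k, (p : ℕ) ≤ k → k < (q : ℕ) → k ∈ S0ofu S0 u) →
      d (u.symm p) = d (u.symm q) := by
    intro c
    induction c with
    | zero =>
      intro p q h _
      have hpq : p = q := Fin.ext (by omega)
      rw [hpq]
    | succ c ih =>
      intro p q h hk
      have hqlt := q.isLt
      have hq' : (p : ℕ) + c < n := by omega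
      have h1 : d (u.symm p) = d (u.symm (⟨(p : ℕ) + c, hq'⟩ : Fin n)) := by
        apply ih p ⟨(p : ℕ) + c, hq'⟩ rfl
        intro k hk1 hk2
        exact hk k hk1 (by simp only [Fin.val_mk] at hk2 ⊢; omega)
      have hmem : ((p : ℕ) + c) ∈ S0ofu S0 u := hk _ (by omega) (by omega)
      obtain ⟨a, b, ha, hbv, hadj, hS⟩ := hmem
      have ha' : a = (⟨(p : ℕ) + c, hq'⟩ : Fin n) := Fin.ext (by simp [ha])
      have hb' : b = q := Fin.ext (by omega)
      have hsb : SameBlock S0 (u.symm a) (u.symm b) := by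
        intro k hk1 hk2
        have hkeq : k = ((u.symm a : Fin n) : ℕ) := by omega
        rw [hkeq]; exact hS
      calc d (u.symm p) = d (u.symm a) := by rw [ha']; exact h1
        _ = d (u.symm b) := hd _ _ hsb
        _ = d (u.symm q) := by rw [hb']
  intro p q hsb
  rcases le_total (p : ℕ) (q : ℕ) with h | h
  · exact key ((q : ℕ) - (p : ℕ)) p q (by omega)
      (fun k h1 h2 => hsb k (by omega) (by omega))
  · exact (key ((p : ℕ) - (q : ℕ)) q p (by omega)
      (fun k h1 h2 => hsb k (by omega) (by omega))).symm

end Helpers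
/-- If `g` and `g' = z·g·b` (with `z ∈ Z_{S₀}`, `b ∈ B`) represent the
same double coset in `Φ_nc(S₀)`, then for every `u ∈ W_n^{S₀}` the classes of
`π_{S₀(u)}(n_u)·w_{0,S₀(u)}` computed from `g` and from `g'` agree in
`Z_{S₀(u)} \ L_{S₀(u)} / L_{S₀(u)}^B`; hence `p_ref` is well defined on `Φ_nc(S₀)`. -/
theorem statement7
    {n : ℕ} (S0 : Set ℕ) (hS0 : ∀ i ∈ S0, i + 1 < n)
    (g g' : Matrix (Fin n) (Fin n) E)
    (hg : NonCritical S0 g) (hg' : NonCritical S0 g')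
    (z b0 : Matrix (Fin n) (Fin n) E)
    (hz : InCenterLevi S0 z) (hb0 : IsBorel b0) (hrep : g' = z * g * b0)
    (ν ν' : Equiv.Perm (Fin n) → Matrix (Fin n) (Fin n) E)
    (hν : ∀ u, WminRep S0 u → IsUniUpper (ν u) ∧
        ∃ b, IsBorel b ∧ permMat E u * g = ν u * w0Mat E n * b)
    (hν' : ∀ u, WminRep S0 u → IsUniUpper (ν' u) ∧
        ∃ b, IsBorel b ∧ permMat E u * g' = ν' u * w0Mat E n * b) :
    ∀ u, WminRep S0 u →
      LeviCosetEq (S0ofu S0 u)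
        (blockPart (S0ofu S0 u) (ν u) * w0Blk E n (S0ofu S0 u))
        (blockPart (S0ofu S0 u) (ν' u) * w0Blk E n (S0ofu S0 u)) := by
  intro u hu
  obtain ⟨hν1, b, hb, hgb⟩ := hν u hu
  obtain ⟨hν'1, b', hb', hgb'⟩ := hν' u hu
  set J := S0ofu S0 u with hJ
  set d : Fin n → E := fun p => z p p with hd
  have hzdiag : z = Matrix.diagonal d := by
    ext p q
    by_cases h : p = q
    · subst h; rw [Matrix.diagonal_apply_eq]
    · rw [hz.2.1 p q h, Matrix.diagonal_apply_ne _ h]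
  have hdne : ∀ p, d p ≠ 0 := by
    intro p hp
    have hdet : IsUnit z.det := (Matrix.isUnit_iff_isUnit_det z).mp hz.1
    rw [hzdiag, Matrix.det_diagonal] at hdet
    rw [isUnit_iff_ne_zero] at hdet
    exact hdet (Finset.prod_eq_zero (Finset.mem_univ p) hp)
  set dU : Fin n → E := fun p => d (u.symm p) with hdU
  set Zu : Matrix (Fin n) (Fin n) E := Matrix.diagonal dU with hZu
  set ZuInv : Matrix (Fin n) (Fin n) E := Matrix.diagonal (fun p => (dU p)⁻¹) with hZuInv
  have hdUne : ∀ p, dU p ≠ 0 := fun p => hdne _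
  have hZZ : Zu * ZuInv = 1 := by
    rw [hZu, hZuInv]; exact diagonal_mul_inv_one hdUne
  have hZZ' : ZuInv * Zu = 1 := by
    rw [hZu, hZuInv]; exact diagonal_inv_mul_one hdUne
  set M : Matrix (Fin n) (Fin n) E := Zu * ν u * ZuInv with hM
  have hMentry : ∀ p q : Fin n, M p q = dU p * ν u p q * (dU q)⁻¹ := by
    intro p q
    rw [hM, hZu, hZuInv, Matrix.mul_diagonal, Matrix.diagonal_mul]
  have hMuni : IsUniUpper M := by
    constructor
    · intro i j hij; rw [hMentry, hν1.1 i j hij, mul_zero, zero_mul]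
    · intro i; rw [hMentry, hν1.2 i, mul_one, mul_inv_cancel₀ (hdUne i)]
  set Dr : Matrix (Fin n) (Fin n) E := Matrix.diagonal (fun p => dU (Fin.rev p)) with hDr
  have hperm_z : permMat E u * z = Zu * permMat E u := by
    rw [hzdiag, permMat_mul_diagonal]
  have hw0Zu : w0Mat E n * Dr = Zu * w0Mat E n := by
    rw [hDr, w0Mat_eq, permMat_mul_diagonal]
    congr 2
    funext i
    simp [Fin.rev_rev]
  have hcancel : ZuInv * (w0Mat E n * Dr) = w0Mat E n := by
    rw [hw0Zu, ← mul_assoc, hZZ', one_mul]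
  have key : permMat E u * g' = M * w0Mat E n * (Dr * (b * b0)) := by
    have h1 : M * w0Mat E n * (Dr * (b * b0))
        = Zu * ν u * (ZuInv * (w0Mat E n * Dr)) * (b * b0) := by
      rw [hM]; simp only [mul_assoc]
    rw [h1, hcancel, hrep]
    calc permMat E u * (z * g * b0)
        = (permMat E u * z) * g * b0 := by simp only [mul_assoc]
      _ = Zu * permMat E u * g * b0 := by rw [hperm_z]
      _ = Zu * (permMat E u * g) * b0 := by rw [mul_assoc Zu]
      _ = Zu * (ν u * w0Mat E n * b) * b0 := by rw [hgb]
      _ = Zu * ν u * w0Mat E n * (b * b0) := by simp only [mul_assoc]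
  have hDrBorel : IsBorel (Dr * (b * b0)) := by
    constructor
    · exact ((isUnit_diagonal_of_ne (fun p => hdUne _)).mul (hb.1.mul hb0.1))
    · refine UT_mul ?_ (UT_mul hb.2 hb0.2)
      intro i j hij
      exact Matrix.diagonal_apply_ne _ (ne_of_gt hij)
  have hνM : ν' u = M :=
    nu_unique hν'1 hMuni hb' hDrBorel (hgb'.symm.trans key)
  have hdconst : ∀ p q : Fin n, SameBlock J p q → dU p = dU q :=
    dconst (fun a b hab => hz.2.2 a b hab)
  refine ⟨Zu, ZuInv, ?_, ?_, ?_⟩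
  · refine ⟨⟨⟨Zu, ZuInv, hZZ, hZZ'⟩, rfl⟩, ?_, ?_⟩
    · intro p q hpq; rw [hZu]; exact Matrix.diagonal_apply_ne _ hpq
    · intro p q hpq
      rw [hZu, Matrix.diagonal_apply_eq, Matrix.diagonal_apply_eq]
      exact hdconst p q hpq
  · refine ⟨⟨⟨⟨ZuInv, Zu, hZZ', hZZ⟩, rfl⟩, ?_⟩, ?_⟩
    · intro p q hpq
      have hne : p ≠ q := by
        rintro rfl
        exact hpq (fun k h1 h2 => absurd h2 (by omega))
      rw [hZuInv]; exact Matrix.diagonal_apply_ne _ hne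
    · intro i j hij; rw [hZuInv]; exact Matrix.diagonal_apply_ne _ (ne_of_gt hij)
  · have hbp : blockPart J (ν' u) = Zu * blockPart J (ν u) * ZuInv := by
      rw [hνM]
      ext p q
      rw [hZu, hZuInv, Matrix.mul_diagonal, Matrix.diagonal_mul]
      by_cases h : SameBlock J p q
      · simp only [blockPart, Matrix.of_apply, if_pos h, hMentry]
      · simp only [blockPart, Matrix.of_apply, if_neg h, mul_zero, zero_mul]
    have hcomm : ZuInv * w0Blk E n J = w0Blk E n J * ZuInv := by
      ext p q
      rw [hZuInv, Matrix.diagonal_mul, Matrix.mul_diagonal]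
      by_cases h : w0Blk E n J p q = 0
      · rw [h, mul_zero, zero_mul]
      · rw [hdconst p q (w0Blk_sameBlock h), mul_comm]
    rw [hbp, mul_assoc (Zu * blockPart J (ν u)) ZuInv (w0Blk E n J), hcomm]
    simp only [mul_assoc]

end Stmt7
end
end

section
/- For every g ∈ GL_n(E) non-critical of type S₀: the class of n'·w_{0,s} in T_s\GL_s(E)/B_s depends only on the double coset Z_{S₀}gB and not on the chosen representative g, and moreover this class lies in Φ^{cr}_{nc,s}, i.e. [v]·n'·w_{0,s} ∈ B_s w_{0,s} B_s for every v ∈ S_s. Consequently p_cr is a well-defined map Φ_nc(S₀) → Φ^{cr}_{nc,s}. (This is the paper's claim that, by the non-critical assumption, extracting the crystalline-quotient parameters factors through the space of non-critical crystalline Hodge parameters.) -/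
/-!
Statement 8: the crystalline-parameter map `p_cr` is well defined on
`Φ_nc(S₀)` and takes values in the space `Φ^cr_{nc,s}` of non-critical crystalline
Hodge parameters.  All indexing is 0-based; `s = n - #S₀` is the number of blocks.
-/

open scoped Classical

noncomputable section

namespace Stmt8

/-- The permutation matrix `[u]`, characterized by `[u] · eⱼ = e_{u j}`. -/
def permMat (E : Type*) [Field E] {n : ℕ} (u : Equiv.Perm (Fin n)) :
    Matrix (Fin n) (Fin n) E :=
  Matrix.of fun i j => if i = u j then 1 else 0

/-- The antidiagonal permutation matrix `w₀`. -/
def w0Mat (E : Type*) [Field E] (n : ℕ) : Matrix (Fin n) (Fin n) E :=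
  Matrix.of fun i j => if (i : ℕ) + (j : ℕ) + 1 = n then 1 else 0

variable {E : Type*} [Field E]

/-- Membership in the Borel subgroup `B` of invertible upper triangular matrices. -/
def IsBorel {n : ℕ} (b : Matrix (Fin n) (Fin n) E) : Prop :=
  IsUnit b ∧ ∀ i j : Fin n, j < i → b i j = 0

/-- Upper triangular unipotent matrices (the group `N`). -/
def IsUniUpper {n : ℕ} (m : Matrix (Fin n) (Fin n) E) : Prop :=
  (∀ i j : Fin n, j < i → m i j = 0) ∧ ∀ i : Fin n, m i i = 1

/-- Membership in the big Bruhat cell `B w₀ B`. -/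
def InBigCell {n : ℕ} (g : Matrix (Fin n) (Fin n) E) : Prop :=
  ∃ b b' : Matrix (Fin n) (Fin n) E, IsBorel b ∧ IsBorel b' ∧ g = b * w0Mat E n * b'

/-- `u ∈ W_n^{S₀}` (0-based). -/
def WminRep {n : ℕ} (S0 : Set ℕ) (u : Equiv.Perm (Fin n)) : Prop :=
  ∀ i j : Fin n, (j : ℕ) = (i : ℕ) + 1 → (i : ℕ) ∈ S0 → u i < u j

/-- `g ∈ GL_n(E)` is non-critical of type `S₀`. -/
def NonCritical {n : ℕ} (S0 : Set ℕ) (g : Matrix (Fin n) (Fin n) E) : Prop :=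
  IsUnit g ∧ ∀ u : Equiv.Perm (Fin n), WminRep S0 u → InBigCell (permMat E u * g)

/-- `p` and `q` lie in the same `J`-block. -/
def SameBlock {n : ℕ} (J : Set ℕ) (p q : Fin n) : Prop :=
  ∀ k : ℕ, min (p : ℕ) (q : ℕ) ≤ k → k < max (p : ℕ) (q : ℕ) → k ∈ J

/-- Membership in the centre `Z_J` of the Levi `L_J`. -/
def InCenterLevi {n : ℕ} (J : Set ℕ) (g : Matrix (Fin n) (Fin n) E) : Prop :=
  IsUnit g ∧ (∀ p q : Fin n, p ≠ q → g p q = 0) ∧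
    ∀ p q : Fin n, SameBlock J p q → g p p = g q q

/-- Invertible diagonal matrices (the torus `T_s`). -/
def IsTorus {s : ℕ} (t : Matrix (Fin s) (Fin s) E) : Prop :=
  IsUnit t ∧ ∀ i j : Fin s, i ≠ j → t i j = 0

/-- Equality of the classes of `x`, `y` in the double-coset space `T_s \ GL_s(E) / B_s`. -/
def CrCosetEq {s : ℕ} (x y : Matrix (Fin s) (Fin s) E) : Prop :=
  ∃ t c : Matrix (Fin s) (Fin s) E, IsTorus t ∧ IsBorel c ∧ y = t * x * c

/-- The bottom-right `s × s` corner of an `n × n` matrix. -/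
def corner {n : ℕ} (s : ℕ) (m : Matrix (Fin n) (Fin n) E) : Matrix (Fin s) (Fin s) E :=
  Matrix.of fun i j =>
    if h : n - s + (i : ℕ) < n ∧ n - s + (j : ℕ) < n then
      m ⟨n - s + (i : ℕ), h.1⟩ ⟨n - s + (j : ℕ), h.2⟩
    else 0

/-- Characterization of the special element `u₀ ∈ W_n^{S₀}`. -/
def IsU0 {n : ℕ} (S0 : Set ℕ) (u : Equiv.Perm (Fin n)) : Prop :=
  (∀ p q : Fin n, p < q → (p : ℕ) ∉ S0 → (q : ℕ) ∉ S0 → u p < u q) ∧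
  (∀ p q : Fin n, p < q → (p : ℕ) ∈ S0 → (q : ℕ) ∈ S0 → u p < u q) ∧
  (∀ p q : Fin n, (p : ℕ) ∈ S0 → (q : ℕ) ∉ S0 → u p < u q)

/-!
Conjugation by `[u₀]` turns `z` into a diagonal matrix `d`; since `B ∩ w₀ B w₀ = T`, the unipotent
factor `ν'` of `[u₀] z g b₀ = d ν w₀ c b₀` is `d ν t` with `t` diagonal. The bottom-right corner of
a product whose left factor is upper triangular is the product of the corners, so the corners of
`ν` and `ν'`, times `w₀`, have the same class in `T_s \ GL_s / B_s`.

For `v ∈ S_s`, let `w` be `v` acting on the last `s` indices. Since `u₀` sends `S₀` to the first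
`#S₀` positions, `w u₀ ∈ W^{S₀}`, and non-criticality of `g` gives `[w] ν = b L` with `b` upper and
`L` lower triangular. Taking corners gives the same factorisation `[v] ν̄ = b̄ L̄` of the corner `ν̄`
of `ν`, that is, `[v] ν̄ w₀ ∈ B w₀ B`.
-/

section PermutationMatrices

variable {n : ℕ}

lemma permMat_eq_toMatrix (u : Equiv.Perm (Fin n)) :
    permMat E u = u.symm.toPEquiv.toMatrix := by
  ext i j
  simp [permMat, PEquiv.toMatrix_apply, Equiv.symm_apply_eq]

lemma permMat_mul_eq_submatrix (u : Equiv.Perm (Fin n)) (X : Matrix (Fin n) (Fin n) E) :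
    permMat E u * X = X.submatrix u.symm id := by
  rw [permMat_eq_toMatrix, PEquiv.toMatrix_toPEquiv_mul]

lemma permMat_mul (u v : Equiv.Perm (Fin n)) :
    permMat E (u * v) = permMat E u * permMat E v := by
  ext i j
  rw [permMat_mul_eq_submatrix]
  simp only [permMat, Matrix.submatrix_apply, Matrix.of_apply, id, Equiv.Perm.mul_apply,
    Equiv.symm_apply_eq]
  congr

lemma w0Mat_eq_toMatrix : w0Mat E n = (Fin.revPerm : Equiv.Perm (Fin n)).toPEquiv.toMatrix := by
  ext i j
  simp only [w0Mat, Matrix.of_apply, PEquiv.toMatrix_apply, Equiv.toPEquiv_apply,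
    Option.mem_def, Option.some.injEq, Fin.revPerm_apply, Fin.ext_iff, Fin.val_rev]
  congr 1
  apply propext
  omega

lemma w0Mat_mul_eq_submatrix (X : Matrix (Fin n) (Fin n) E) :
    w0Mat E n * X = X.submatrix Fin.rev id := by
  rw [w0Mat_eq_toMatrix, PEquiv.toMatrix_toPEquiv_mul]
  rfl

lemma w0Mat_conj_apply (X : Matrix (Fin n) (Fin n) E) (i j : Fin n) :
    (w0Mat E n * X * w0Mat E n) i j = X i.rev j.rev := by
  rw [w0Mat_mul_eq_submatrix, w0Mat_eq_toMatrix, PEquiv.mul_toMatrix_toPEquiv]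
  rfl

lemma w0Mat_mul_self : w0Mat E n * w0Mat E n = 1 := by
  ext i j
  rw [w0Mat_mul_eq_submatrix]
  simp only [Matrix.submatrix_apply, id, w0Mat, Matrix.of_apply, Matrix.one_apply, Fin.ext_iff,
    Fin.val_rev]
  congr 1
  apply propext
  omega

lemma isUnit_w0Mat : IsUnit (w0Mat E n) :=
  IsUnit.of_mul_eq_one _ w0Mat_mul_self

end PermutationMatrices

section Triangular

variable {n : ℕ}

lemma isUnit_iff_forall_ne_zero_of_det_eq_prod_diag {M : Matrix (Fin n) (Fin n) E}
    (hM : M.det = ∏ i, M i i) : IsUnit M ↔ ∀ i, M i i ≠ 0 := by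
  rw [Matrix.isUnit_iff_isUnit_det, hM, isUnit_iff_ne_zero, Finset.prod_ne_zero_iff]
  simp

lemma IsBorel.mul {b c : Matrix (Fin n) (Fin n) E} (hb : IsBorel b) (hc : IsBorel c) :
    IsBorel (b * c) :=
  ⟨hb.1.mul hc.1, Matrix.BlockTriangular.mul hb.2 hc.2⟩

lemma IsBorel.inv {b : Matrix (Fin n) (Fin n) E} (hb : IsBorel b) : IsBorel b⁻¹ := by
  have := b.invertibleOfIsUnitDet ((Matrix.isUnit_iff_isUnit_det b).1 hb.1)
  exact ⟨(Matrix.isUnit_nonsing_inv_iff).2 hb.1,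
    Matrix.blockTriangular_inv_of_blockTriangular (b := id) hb.2⟩

lemma IsUniUpper.isBorel {m : Matrix (Fin n) (Fin n) E} (hm : IsUniUpper m) : IsBorel m :=
  ⟨(isUnit_iff_forall_ne_zero_of_det_eq_prod_diag (Matrix.det_of_isUpperTriangular hm.1)).2
    fun i => by simp [hm.2 i], hm.1⟩

lemma IsTorus.isBorel {t : Matrix (Fin n) (Fin n) E} (ht : IsTorus t) : IsBorel t :=
  ⟨ht.1, fun _ _ h => ht.2 _ _ h.ne'⟩

lemma IsTorus.w0Mat_conj {t : Matrix (Fin n) (Fin n) E} (ht : IsTorus t) :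
    IsTorus (w0Mat E n * t * w0Mat E n) :=
  ⟨(isUnit_w0Mat.mul ht.1).mul isUnit_w0Mat, fun i j h => by
    rw [w0Mat_conj_apply]
    exact ht.2 _ _ (Fin.rev_injective.ne h)⟩

lemma isUpperTriangular_w0Mat_conj_iff {M : Matrix (Fin n) (Fin n) E} :
    (w0Mat E n * M * w0Mat E n).IsUpperTriangular ↔ M.IsLowerTriangular := by
  refine ⟨fun h i j hij => ?_, fun h i j hij => ?_⟩
  · simpa [w0Mat_conj_apply] using h (i := i.rev) (j := j.rev) (Fin.rev_lt_rev.2 hij)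
  · rw [w0Mat_conj_apply]
    exact h (Fin.rev_lt_rev.2 hij)

lemma IsBorel.w0Mat_conj_isLowerTriangular {b : Matrix (Fin n) (Fin n) E} (hb : IsBorel b) :
    (w0Mat E n * b * w0Mat E n).IsLowerTriangular := by
  have hconj : w0Mat E n * (w0Mat E n * b * w0Mat E n) * w0Mat E n = b := by
    simp only [← mul_assoc, w0Mat_mul_self, one_mul]
    rw [mul_assoc, w0Mat_mul_self, mul_one]
  rw [← isUpperTriangular_w0Mat_conj_iff, hconj]
  exact hb.2

lemma isTorus_of_isBorel_of_isLowerTriangular {t : Matrix (Fin n) (Fin n) E} (ht : IsBorel t)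
    (hlow : t.IsLowerTriangular) : IsTorus t :=
  ⟨ht.1, fun _ _ h => h.lt_or_gt.elim (fun h => hlow h) fun h => ht.2 _ _ h⟩

-- `B ∩ w₀ B w₀ = T`: here `b₂⁻¹ b₁ = w₀ (c₂ c₁⁻¹) w₀` is both upper and lower triangular.
lemma exists_isTorus_eq_mul_of_mul_w0Mat_mul_eq {b₁ b₂ c₁ c₂ : Matrix (Fin n) (Fin n) E}
    (hb₁ : IsBorel b₁) (hb₂ : IsBorel b₂) (hc₁ : IsBorel c₁) (hc₂ : IsBorel c₂)
    (h : b₁ * w0Mat E n * c₁ = b₂ * w0Mat E n * c₂) : ∃ t, IsTorus t ∧ b₁ = b₂ * t := by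
  have hb₂det := (Matrix.isUnit_iff_isUnit_det b₂).1 hb₂.1
  have hc₁det := (Matrix.isUnit_iff_isUnit_det c₁).1 hc₁.1
  have hconj : b₂⁻¹ * b₁ = w0Mat E n * (c₂ * c₁⁻¹) * w0Mat E n := by
    calc b₂⁻¹ * b₁ = b₂⁻¹ * (b₁ * w0Mat E n * c₁ * c₁⁻¹ * w0Mat E n) := by
          rw [Matrix.mul_nonsing_inv_cancel_right _ _ hc₁det, mul_assoc, w0Mat_mul_self, mul_one]
      _ = w0Mat E n * (c₂ * c₁⁻¹) * w0Mat E n := by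
          rw [h, mul_assoc b₂, mul_assoc b₂, mul_assoc b₂,
            Matrix.nonsing_inv_mul_cancel_left _ _ hb₂det]
          simp only [mul_assoc]
  refine ⟨b₂⁻¹ * b₁, isTorus_of_isBorel_of_isLowerTriangular (hb₂.inv.mul hb₁) ?_, ?_⟩
  · rw [hconj]
    exact (hc₂.mul hc₁.inv).w0Mat_conj_isLowerTriangular
  · exact (Matrix.mul_nonsing_inv_cancel_left _ _ hb₂det).symm

lemma IsTorus.exists_permMat_mul_eq {z : Matrix (Fin n) (Fin n) E} (hz : IsTorus z)
    (u : Equiv.Perm (Fin n)) : ∃ d, IsTorus d ∧ permMat E u * z = d * permMat E u := by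
  refine ⟨z.submatrix u.symm u.symm, ⟨?_, fun i j h => hz.2 _ _ (u.symm.injective.ne h)⟩, ?_⟩
  · rw [Matrix.isUnit_iff_isUnit_det, Matrix.det_submatrix_equiv_self]
    exact (Matrix.isUnit_iff_isUnit_det z).1 hz.1
  · rw [permMat_mul_eq_submatrix, permMat_eq_toMatrix, PEquiv.mul_toMatrix_toPEquiv,
      Matrix.submatrix_submatrix, Equiv.self_comp_symm]
    rfl

end Triangular

section Corner

variable {n s : ℕ}

def tailEmb (hs : s ≤ n) : Fin s ↪o Fin n :=
  OrderEmbedding.ofStrictMono (fun k => ⟨n - s + k, by omega⟩) fun _ _ h =>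
    Fin.mk_lt_mk.2 (Nat.add_lt_add_left h _)

@[simp]
lemma val_tailEmb (hs : s ≤ n) (k : Fin s) : (tailEmb hs k : ℕ) = n - s + k :=
  rfl

lemma mem_range_tailEmb_iff (hs : s ≤ n) (i : Fin n) :
    i ∈ Set.range (tailEmb hs) ↔ n - s ≤ i := by
  refine ⟨fun ⟨k, hk⟩ => by simp [← hk], fun h => ⟨⟨i - (n - s), by omega⟩, Fin.ext ?_⟩⟩
  simp only [val_tailEmb]
  omega

lemma corner_eq_submatrix (hs : s ≤ n) (M : Matrix (Fin n) (Fin n) E) :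
    corner s M = M.submatrix (tailEmb hs) (tailEmb hs) := by
  ext i j
  rw [corner, Matrix.of_apply, dif_pos ⟨by omega, by omega⟩]
  rfl

lemma corner_isUpperTriangular (hs : s ≤ n) {M : Matrix (Fin n) (Fin n) E}
    (hM : M.IsUpperTriangular) : (corner s M).IsUpperTriangular := by
  rw [corner_eq_submatrix hs]
  exact fun i j h => hM ((tailEmb hs).lt_iff_lt.2 h)

lemma corner_isLowerTriangular (hs : s ≤ n) {M : Matrix (Fin n) (Fin n) E}
    (hM : M.IsLowerTriangular) : (corner s M).IsLowerTriangular := by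
  rw [corner_eq_submatrix hs]
  exact fun i j h => hM (show tailEmb hs i < tailEmb hs j from (tailEmb hs).lt_iff_lt.2 h)

lemma IsBorel.corner (hs : s ≤ n) {b : Matrix (Fin n) (Fin n) E} (hb : IsBorel b) :
    IsBorel (corner s b) := by
  have hcb := corner_isUpperTriangular hs hb.2
  refine ⟨(isUnit_iff_forall_ne_zero_of_det_eq_prod_diag (Matrix.det_of_isUpperTriangular hcb)).2
    fun i => ?_, hcb⟩
  rw [corner_eq_submatrix hs]
  exact (isUnit_iff_forall_ne_zero_of_det_eq_prod_diag (Matrix.det_of_isUpperTriangular hb.2)).1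
    hb.1 _

lemma isUnit_corner_of_isLowerTriangular (hs : s ≤ n) {L : Matrix (Fin n) (Fin n) E}
    (hL : L.IsLowerTriangular) (hLu : IsUnit L) : IsUnit (corner s L) := by
  refine (isUnit_iff_forall_ne_zero_of_det_eq_prod_diag
    (Matrix.det_of_isLowerTriangular _ (corner_isLowerTriangular hs hL))).2 fun i => ?_
  rw [corner_eq_submatrix hs]
  exact (isUnit_iff_forall_ne_zero_of_det_eq_prod_diag
    (Matrix.det_of_isLowerTriangular _ hL)).1 hLu _

lemma IsTorus.corner (hs : s ≤ n) {t : Matrix (Fin n) (Fin n) E} (ht : IsTorus t) :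
    IsTorus (corner s t) :=
  ⟨ht.isBorel.corner hs |>.1, fun i j h => by
    rw [corner_eq_submatrix hs]
    exact ht.2 _ _ ((tailEmb hs).injective.ne h)⟩

-- In a row of the corner, `U` vanishes on all columns left of the corner.
lemma corner_mul_of_isUpperTriangular (hs : s ≤ n) {U : Matrix (Fin n) (Fin n) E}
    (hU : U.IsUpperTriangular) (X : Matrix (Fin n) (Fin n) E) :
    corner s (U * X) = corner s U * corner s X := by
  ext i j
  simp only [corner_eq_submatrix hs, Matrix.submatrix_apply, Matrix.mul_apply]
  refine Eq.trans ?_ (Finset.sum_map Finset.univ (tailEmb hs).toEmbedding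
    fun k => U (tailEmb hs i) k * X k (tailEmb hs j))
  refine (Finset.sum_subset (Finset.subset_univ _) fun k _ hk => ?_).symm
  have hlt : (k : ℕ) < n - s := by
    by_contra hge
    obtain ⟨l, rfl⟩ := (mem_range_tailEmb_iff hs k).2 (by omega)
    exact hk (Finset.mem_map_of_mem _ (Finset.mem_univ l))
  rw [hU (show k < tailEmb hs i by rw [Fin.lt_def, val_tailEmb]; omega), zero_mul]

end Corner

section LiftPerm

variable {n s : ℕ}

def liftPerm (hs : s ≤ n) (v : Equiv.Perm (Fin s)) : Equiv.Perm (Fin n) :=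
  v.extendDomain (Equiv.ofInjective _ (tailEmb hs).injective)

lemma liftPerm_apply_tailEmb (hs : s ≤ n) (v : Equiv.Perm (Fin s)) (k : Fin s) :
    liftPerm hs v (tailEmb hs k) = tailEmb hs (v k) :=
  Equiv.Perm.extendDomain_apply_image v _ k

lemma liftPerm_apply_of_lt (hs : s ≤ n) (v : Equiv.Perm (Fin s)) {i : Fin n}
    (hi : (i : ℕ) < n - s) : liftPerm hs v i = i :=
  Equiv.Perm.extendDomain_apply_not_subtype v _ fun h => by
    have := (mem_range_tailEmb_iff hs i).1 h
    omega

lemma le_liftPerm_apply (hs : s ≤ n) (v : Equiv.Perm (Fin s)) {i : Fin n}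
    (hi : n - s ≤ (i : ℕ)) : n - s ≤ (liftPerm hs v i : ℕ) := by
  obtain ⟨k, rfl⟩ := (mem_range_tailEmb_iff hs i).2 hi
  simp [liftPerm_apply_tailEmb]

lemma corner_permMat_liftPerm_mul (hs : s ≤ n) (v : Equiv.Perm (Fin s))
    (X : Matrix (Fin n) (Fin n) E) :
    corner s (permMat E (liftPerm hs v) * X) = permMat E v * corner s X := by
  ext i j
  rw [corner_eq_submatrix hs, permMat_mul_eq_submatrix, permMat_mul_eq_submatrix,
    corner_eq_submatrix hs]
  simp only [Matrix.submatrix_apply, id]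
  rw [← Equiv.Perm.inv_def, ← Equiv.Perm.inv_def, liftPerm, Equiv.Perm.extendDomain_inv,
    ← liftPerm, liftPerm_apply_tailEmb]

end LiftPerm

section WeylGroup

variable {n : ℕ}

lemma WminRep.mul_of_apply_lt {S0 : Set ℕ} {u w : Equiv.Perm (Fin n)} {k : ℕ}
    (hu : WminRep S0 u) (huS0 : ∀ i : Fin n, (i : ℕ) ∈ S0 → (u i : ℕ) < k)
    (hw_fix : ∀ i : Fin n, (i : ℕ) < k → w i = i) (hw_ge : ∀ i : Fin n, k ≤ i → k ≤ (w i : ℕ)) :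
    WminRep S0 (w * u) := by
  intro i j hij hi
  have hui := huS0 i hi
  simp only [Equiv.Perm.mul_apply, hw_fix _ hui]
  by_cases huj : (u j : ℕ) < k
  · rw [hw_fix _ huj]
    exact hu i j hij hi
  · have := hw_ge (u j) (not_lt.1 huj)
    rw [Fin.lt_def]
    omega

-- `u` maps the complement of `A` injectively above `u a`, so `A` must make up the rest.
lemma _root_.Equiv.Perm.val_lt_ncard_of_forall_lt (u : Equiv.Perm (Fin n)) {A : Set (Fin n)}
    (hA : ∀ a ∈ A, ∀ b ∉ A, u a < u b) {a : Fin n} (ha : a ∈ A) : (u a : ℕ) < A.ncard := by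
  have hcompl : Aᶜ.ncard ≤ (Set.Ioi (u a)).ncard :=
    Set.ncard_le_ncard_of_injOn u (fun b hb => hA a ha b hb) u.injective.injOn
  have hsum := Set.ncard_add_ncard_compl A
  rw [Set.ncard_eq_toFinset_card' (Set.Ioi (u a)), Set.toFinset_Ioi, Fin.card_Ioi] at hcompl
  rw [Nat.card_eq_fintype_card, Fintype.card_fin] at hsum
  have := (u a).isLt
  omega

lemma ncard_preimage_val {S0 : Set ℕ} (hS0 : ∀ i ∈ S0, i < n) :
    (Fin.val ⁻¹' S0 : Set (Fin n)).ncard = S0.ncard :=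
  Set.ncard_preimage_of_injective_subset_range Fin.val_injective fun i hi =>
    ⟨⟨i, hS0 i hi⟩, rfl⟩

lemma IsU0.val_lt_ncard {S0 : Set ℕ} (hS0 : ∀ i ∈ S0, i < n) {u : Equiv.Perm (Fin n)}
    (hu : IsU0 S0 u) {i : Fin n} (hi : (i : ℕ) ∈ S0) : (u i : ℕ) < S0.ncard := by
  rw [← ncard_preimage_val hS0]
  exact u.val_lt_ncard_of_forall_lt (fun a ha b hb => hu.2.2 a b ha hb) hi

end WeylGroup

section CrystallineParameter

variable {n s : ℕ}

lemma crCosetEq_corner_mul_w0Mat_of_permMat_mul_eq (hs : s ≤ n) {u : Equiv.Perm (Fin n)}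
    {z g b₀ ν ν' c c' : Matrix (Fin n) (Fin n) E} (hz : IsTorus z) (hb₀ : IsBorel b₀)
    (hν : IsBorel ν) (hν' : IsBorel ν') (hc : IsBorel c) (hc' : IsBorel c')
    (h : permMat E u * g = ν * w0Mat E n * c)
    (h' : permMat E u * (z * g * b₀) = ν' * w0Mat E n * c') :
    CrCosetEq (corner s ν * w0Mat E s) (corner s ν' * w0Mat E s) := by
  obtain ⟨d, hd, hdu⟩ := hz.exists_permMat_mul_eq u
  have hdν : IsBorel (d * ν) := hd.isBorel.mul hν
  obtain ⟨t, ht, hν't⟩ := exists_isTorus_eq_mul_of_mul_w0Mat_mul_eq hν' hdν hc' (hc.mul hb₀) <| by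
    rw [← h', ← mul_assoc, ← mul_assoc, hdu, mul_assoc d, h]
    simp only [mul_assoc]
  refine ⟨corner s d, w0Mat E s * corner s t * w0Mat E s, hd.corner hs,
    (ht.corner hs).w0Mat_conj.isBorel, ?_⟩
  rw [hν't, corner_mul_of_isUpperTriangular hs hdν.2,
    corner_mul_of_isUpperTriangular hs hd.isBorel.2]
  simp only [mul_assoc, ← mul_assoc (w0Mat E s) (w0Mat E s), w0Mat_mul_self, one_mul]

lemma inBigCell_permMat_mul_corner_mul_w0Mat (hs : s ≤ n) (v : Equiv.Perm (Fin s))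
    {ν c : Matrix (Fin n) (Fin n) E} (hc : IsBorel c)
    (h : InBigCell (permMat E (liftPerm hs v) * (ν * w0Mat E n * c))) :
    InBigCell (permMat E v * (corner s ν * w0Mat E s)) := by
  obtain ⟨b, b', hb, hb', hbig⟩ := h
  set L := w0Mat E n * (b' * c⁻¹) * w0Mat E n with hL_def
  have hL : L.IsLowerTriangular := (hb'.mul hc.inv).w0Mat_conj_isLowerTriangular
  have hLu : IsUnit L := (isUnit_w0Mat.mul (hb'.mul hc.inv).1).mul isUnit_w0Mat
  have hfac : permMat E (liftPerm hs v) * ν = b * L := by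
    have hcdet := (Matrix.isUnit_iff_isUnit_det c).1 hc.1
    calc permMat E (liftPerm hs v) * ν
        = permMat E (liftPerm hs v) * (ν * w0Mat E n * c) * c⁻¹ * w0Mat E n := by
          rw [← mul_assoc, Matrix.mul_nonsing_inv_cancel_right _ _ hcdet, mul_assoc,
            mul_assoc, w0Mat_mul_self, mul_one]
      _ = b * L := by
          rw [hbig, hL_def]
          simp only [mul_assoc]
  refine ⟨corner s b, w0Mat E s * corner s L * w0Mat E s, hb.corner hs,
    ⟨(isUnit_w0Mat.mul (isUnit_corner_of_isLowerTriangular hs hL hLu)).mul isUnit_w0Mat,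
      isUpperTriangular_w0Mat_conj_iff.2 (corner_isLowerTriangular hs hL)⟩, ?_⟩
  rw [← mul_assoc, ← corner_permMat_liftPerm_mul hs, hfac,
    corner_mul_of_isUpperTriangular hs hb.2]
  simp only [mul_assoc, ← mul_assoc (w0Mat E s) (w0Mat E s), w0Mat_mul_self, one_mul]

end CrystallineParameter

theorem statement8_general
    {n : ℕ} (S0 : Set ℕ) (hS0 : ∀ i ∈ S0, i + 1 < n)
    (g g' : Matrix (Fin n) (Fin n) E)
    (hg : NonCritical S0 g)
    (z b0 : Matrix (Fin n) (Fin n) E)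
    (hz : InCenterLevi S0 z) (hb0 : IsBorel b0) (hrep : g' = z * g * b0)
    (u0 : Equiv.Perm (Fin n)) (hu0 : IsU0 S0 u0) (hu0W : WminRep S0 u0)
    (nu nu' : Matrix (Fin n) (Fin n) E)
    (hnu : IsUniUpper nu ∧ ∃ c, IsBorel c ∧ permMat E u0 * g = nu * w0Mat E n * c)
    (hnu' : IsUniUpper nu' ∧ ∃ c, IsBorel c ∧ permMat E u0 * g' = nu' * w0Mat E n * c) :
    CrCosetEq (corner (n - S0.ncard) nu * w0Mat E (n - S0.ncard))
        (corner (n - S0.ncard) nu' * w0Mat E (n - S0.ncard)) ∧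
    ∀ v : Equiv.Perm (Fin (n - S0.ncard)),
      InBigCell (permMat E v * (corner (n - S0.ncard) nu * w0Mat E (n - S0.ncard))) := by
  obtain ⟨hnu, c, hc, hgc⟩ := hnu
  obtain ⟨hnu', c', hc', hgc'⟩ := hnu'
  have hS0n : ∀ i ∈ S0, i < n := fun i hi => (Nat.lt_succ_self i).trans (hS0 i hi)
  have hs : n - S0.ncard ≤ n := Nat.sub_le _ _
  have hoffset : n - (n - S0.ncard) = S0.ncard :=
    Nat.sub_sub_self <|
      (Set.ncard_le_ncard (show S0 ⊆ Set.Iio n from hS0n)).trans_eq (Set.ncard_Iio_nat n)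
  refine ⟨crCosetEq_corner_mul_w0Mat_of_permMat_mul_eq hs ⟨hz.1, hz.2.1⟩ hb0 hnu.isBorel
    hnu'.isBorel hc hc' hgc (hrep ▸ hgc'), fun v => ?_⟩
  have hW : WminRep S0 (liftPerm hs v * u0) :=
    hu0W.mul_of_apply_lt (fun _ hi => (hu0.val_lt_ncard hS0n hi).trans_eq hoffset.symm)
      (fun _ => liftPerm_apply_of_lt hs v) fun _ => le_liftPerm_apply hs v
  refine inBigCell_permMat_mul_corner_mul_w0Mat hs v hc ?_
  rw [← hgc, ← mul_assoc, ← permMat_mul]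
  exact hg.2 _ hW

/-- Let `g` be non-critical of type `S₀` and `g' = z·g·b₀` another
representative of its double coset.  Write `[u₀]g = n_{u₀}·w₀·b` and similarly for `g'`,
and let `n'` be the bottom-right `s×s` corner of `n_{u₀}`.  Then the class of `n'·w_{0,s}`
in `T_s\GL_s(E)/B_s` is the same for `g` and `g'`, and it lies in `Φ^cr_{nc,s}`:
`[v]·n'·w_{0,s} ∈ B_s w_{0,s} B_s` for every `v ∈ S_s`.  Hence `p_cr` is a well-defined
map `Φ_nc(S₀) → Φ^cr_{nc,s}`. -/
theorem statement8
    {n : ℕ} (S0 : Set ℕ) (hS0 : ∀ i ∈ S0, i + 1 < n)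
    (g g' : Matrix (Fin n) (Fin n) E)
    (hg : NonCritical S0 g) (hg' : NonCritical S0 g')
    (z b0 : Matrix (Fin n) (Fin n) E)
    (hz : InCenterLevi S0 z) (hb0 : IsBorel b0) (hrep : g' = z * g * b0)
    (u0 : Equiv.Perm (Fin n)) (hu0 : IsU0 S0 u0) (hu0W : WminRep S0 u0)
    (nu nu' : Matrix (Fin n) (Fin n) E)
    (hnu : IsUniUpper nu ∧ ∃ c, IsBorel c ∧ permMat E u0 * g = nu * w0Mat E n * c)
    (hnu' : IsUniUpper nu' ∧ ∃ c, IsBorel c ∧ permMat E u0 * g' = nu' * w0Mat E n * c) :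
    CrCosetEq (corner (n - S0.ncard) nu * w0Mat E (n - S0.ncard))
        (corner (n - S0.ncard) nu' * w0Mat E (n - S0.ncard)) ∧
    ∀ v : Equiv.Perm (Fin (n - S0.ncard)),
      InBigCell (permMat E v * (corner (n - S0.ncard) nu * w0Mat E (n - S0.ncard))) :=
  statement8_general S0 hS0 g g' hg z b0 hz hb0 hrep u0 hu0 hu0W nu nu' hnu hnu'

end Stmt8
end
end
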